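/- (Lemma A-7) For every collaborative Nash equilibrium s* (a Nash equilibrium with C(g*) = {i, j} and g*_{ij} = g*_{ji} = 1), there exists an independent Nash equilibrium s** with C(g**) = {the player of type 0, the player of type 1} whose total welfare Σ_{ℓ∈N} U_ℓ(s**) is strictly greater than Σ_{ℓ∈N} U_ℓ(s*). Consequently, a welfare maximizing equilibrium is never collaborative. -/

import Mathlib

open Filter

noncomputable section

/-- `(x, y)` is an isolation demand for taste `t`: a maximizer of
`t·f(x) + (1−t)·f(y) − c·(x+y)` over nonnegative contributions. -/
def IsIsolationDemand (f : ℝ → ℝ) (c t x y : ℝ) : Prop :=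
  0 ≤ x ∧ 0 ≤ y ∧
  ∀ x' y' : ℝ, 0 ≤ x' → 0 ≤ y' →
    t * f x' + (1 - t) * f y' - c * (x' + y') ≤ t * f x + (1 - t) * f y - c * (x + y)

/-- Maintained assumptions on the benefit function `f`: twice continuously
differentiable, strictly increasing, strictly concave on `[0,∞)`, with
`lim_{z→0⁺} f′(z) > c` (possibly `+∞`, hence an `EReal` limit) and
`lim_{z→∞} f′(z) = m < c`. -/
def BenefitAssumptions (f : ℝ → ℝ) (c : ℝ) : Prop :=
  ContDiffOn ℝ 2 f (Set.Ici 0) ∧ StrictMonoOn f (Set.Ici 0) ∧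
  StrictConcaveOn ℝ (Set.Ici 0) f ∧
  (∃ L : EReal, Tendsto (fun z => Real.toEReal (deriv f z)) (nhdsWithin 0 (Set.Ioi 0)) (nhds L) ∧
    (c : EReal) < L) ∧
  (∃ m : ℝ, Tendsto (deriv f) atTop (nhds m) ∧ m < c)

/-- Spillovers of a good with contribution profile `x` received by `i`
through the links she sponsors in `g`. -/
def spill {n : ℕ} (x : Fin n → ℝ) (g : Fin n → Fin n → Bool) (i : Fin n) : ℝ :=
  ∑ j, if g i j then x j else 0

/-- Number of links sponsored by `i` (as a real number). -/
def nlinks {n : ℕ} (g : Fin n → Fin n → Bool) (i : Fin n) : ℝ :=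
  ∑ j, if g i j then (1 : ℝ) else 0

/-- Utility of player `i` under the strategy profile `(x, y, g)`. -/
def payoff {n : ℕ} (t : Fin n → ℝ) (f : ℝ → ℝ) (c k : ℝ)
    (x y : Fin n → ℝ) (g : Fin n → Fin n → Bool) (i : Fin n) : ℝ :=
  t i * f (x i + spill x g i) + (1 - t i) * f (y i + spill y g i)
    - c * (x i + y i) - nlinks g i * k

/-- Replace player `i`'s row of links by `gi`. -/
def updLinks {n : ℕ} (g : Fin n → Fin n → Bool) (i : Fin n) (gi : Fin n → Bool) :
    Fin n → Fin n → Bool :=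
  fun a b => if a = i then gi b else g a b

/-- Nash equilibrium: contributions are nonnegative, nobody links to herself,
and no player can strictly gain by simultaneously changing her own
contributions and links. -/
def NashEq {n : ℕ} (t : Fin n → ℝ) (f : ℝ → ℝ) (c k : ℝ)
    (x y : Fin n → ℝ) (g : Fin n → Fin n → Bool) : Prop :=
  (∀ i, 0 ≤ x i) ∧ (∀ i, 0 ≤ y i) ∧ (∀ i, g i i = false) ∧
  ∀ (i : Fin n) (xi yi : ℝ) (gi : Fin n → Bool), 0 ≤ xi → 0 ≤ yi → gi i = false →
    payoff t f c k (Function.update x i xi) (Function.update y i yi) (updLinks g i gi) i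
      ≤ payoff t f c k x y g i

/-- Assumptions on taste parameters: pairwise distinct, in `[0,1]`, and the
extreme types `0` and `1` are realized. -/
def TypeAssumptions {n : ℕ} (t : Fin n → ℝ) : Prop :=
  Function.Injective t ∧ (∀ i, t i ∈ Set.Icc (0:ℝ) 1) ∧ (∃ i, t i = 0) ∧ (∃ i, t i = 1)

/-- `i` is a large contributor in `g`: she receives at least one link. -/
def isContributor {n : ℕ} (g : Fin n → Fin n → Bool) (i : Fin n) : Prop :=
  ∃ j, g j i = true

/-- `i` is isolated in `g`: she neither sponsors nor receives links. -/
def isIsolated {n : ℕ} (g : Fin n → Fin n → Bool) (i : Fin n) : Prop :=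
  (∀ j, g i j = false) ∧ (∀ j, g j i = false)


open Set
set_option linter.unusedSectionVars false
set_option linter.unusedVariables false
set_option maxHeartbeats 1000000

namespace S16


/-- `z` maximizes `t f · - c ·` on `[0,∞)`. -/
def maxAt (f : ℝ → ℝ) (c t z : ℝ) : Prop :=
  0 ≤ z ∧ ∀ x, 0 ≤ x → t * f x - c * x ≤ t * f z - c * z

open Classical in
/-- a maximizer of `t f · - c ·`, when it exists. -/
def zfun (f : ℝ → ℝ) (c t : ℝ) : ℝ :=
  if h : ∃ z, maxAt f c t z then h.choose else 0

/-- standalone value -/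
def Wf (f : ℝ → ℝ) (c t : ℝ) : ℝ := t * f (zfun f c t) - c * zfun f c t

def Xs (f : ℝ → ℝ) (c : ℝ) : ℝ := zfun f c 1

/-- value of the `t`-good problem with free spill `S`. -/
def Vf (f : ℝ → ℝ) (c t S : ℝ) : ℝ :=
  t * f (max S (zfun f c t)) - c * (max S (zfun f c t) - S)

def Df (f : ℝ → ℝ) (c t : ℝ) : ℝ := t * f (Xs f c) - Wf f c t

variable {f : ℝ → ℝ} {c : ℝ}

lemma zfun_spec {t : ℝ} (h : ∃ z, maxAt f c t z) : maxAt f c t (zfun f c t) := by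
  rw [zfun, dif_pos h]; exact h.choose_spec

section WithAssumptions

variable (hB : BenefitAssumptions f c) (hc : 0 < c)
include hB

lemma hf_cont : ContinuousOn f (Ici 0) := hB.1.continuousOn

lemma hf_deriv {z : ℝ} (hz : 0 < z) : HasDerivAt f (deriv f z) z := by
  have h1 : ContDiffAt ℝ 2 f z := hB.1.contDiffAt (Ici_mem_nhds hz)
  exact (h1.differentiableAt (by norm_num)).hasDerivAt

/-- key concavity exchange inequality -/
lemma concave_pair {q A p : ℝ} (h0 : 0 ≤ q) (h1 : q ≤ A) (h2 : A ≤ p) :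
    f p + f q ≤ f A + f (p + q - A) := by
  rcases eq_or_lt_of_le (h1.trans h2) with h | hqp
  · have hAq : A = q := le_antisymm (by rw [h]; exact h2) h1
    have hE : p + q - A = p := by rw [hAq]; ring
    rw [hE, hAq]; linarith
  · have hpq : 0 < p - q := by linarith
    set l := (p - A) / (p - q) with hl
    set m := (A - q) / (p - q) with hm
    have hl0 : 0 ≤ l := div_nonneg (by linarith) hpq.le
    have hm0 : 0 ≤ m := div_nonneg (by linarith) hpq.le
    have hlm : l + m = 1 := by rw [hl, hm]; field_simp; ring
    have hq' : q ∈ Ici (0:ℝ) := h0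
    have hp' : p ∈ Ici (0:ℝ) := le_trans h0 (h1.trans h2)
    have hcon := hB.2.2.1.concaveOn
    have e1 : l • q + m • p = A := by
      simp only [smul_eq_mul, hl, hm]; field_simp; ring
    have e2 : m • q + l • p = p + q - A := by
      simp only [smul_eq_mul, hl, hm]; field_simp; ring
    have i1 := hcon.2 hq' hp' hl0 hm0 hlm
    have i2 := hcon.2 hq' hp' hm0 hl0 (by linarith)
    rw [e1] at i1
    rw [e2] at i2
    simp only [smul_eq_mul] at i1 i2
    calc f p + f q = (l + m) * (f p + f q) := by rw [hlm]; ring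
      _ = (l * f q + m * f p) + (m * f q + l * f p) := by ring
      _ ≤ f A + f (p + q - A) := add_le_add i1 i2

include hc

/-- any maximizer for `t = 1` is positive -/
lemma max_one_pos {z : ℝ} (h : maxAt f c 1 z) : 0 < z := by
  -- find u > 0 with f u - c u > f 0
  obtain ⟨L, hL, hcL⟩ := hB.2.2.2.1
  have hev : ∀ᶠ w in nhdsWithin 0 (Ioi (0:ℝ)), Real.toEReal c < Real.toEReal (deriv f w) :=
    hL.eventually_const_lt hcL
  rw [eventually_nhdsWithin_iff] at hev
  obtain ⟨s, hs, hs0, hsub⟩ := eventually_nhds_iff.mp hev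
  obtain ⟨δ, hδ0, hδball⟩ := Metric.isOpen_iff.mp hs0 0 hsub
  set u := δ / 2 with hu
  have hu0 : 0 < u := by positivity
  have hderiv_gt : ∀ w, w ∈ Ioo (0:ℝ) u → c < deriv f w := by
    intro w hw
    have hwball : w ∈ Metric.ball (0:ℝ) δ := by
      rw [Metric.mem_ball, Real.dist_eq, sub_zero, abs_of_pos hw.1]
      have : u < δ := by rw [hu]; linarith
      linarith [hw.2]
    have := hs w (hδball hwball) hw.1
    exact_mod_cast this
  have hcont' : ContinuousOn f (Icc 0 u) := (hf_cont hB).mono (Icc_subset_Ici_self)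
  obtain ⟨ξ, hξ, hslope⟩ := exists_hasDerivAt_eq_slope f (deriv f) hu0 hcont'
    (fun w hw => hf_deriv hB hw.1)
  have h1 : c < (f u - f 0) / (u - 0) := hslope ▸ hderiv_gt ξ hξ
  have h2 : c * u < f u - f 0 := by
    rw [sub_zero] at h1
    calc c * u < ((f u - f 0)/u) * u := by
          apply mul_lt_mul_of_pos_right h1 hu0
      _ = f u - f 0 := by field_simp
  by_contra hz
  push_neg at hz
  have hz0 : z = 0 := le_antisymm hz h.1
  have := h.2 u hu0.le
  rw [hz0] at this
  simp at this
  nlinarith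

/-- existence of a maximizer for `t = 1`. -/
lemma exists_max_one : ∃ z, maxAt f c 1 z := by
  obtain ⟨m, hm, hmc⟩ := hB.2.2.2.2
  set c' := (c + m) / 2 with hc'
  have hc'm : m < c' := by rw [hc']; linarith
  have hc'c : c' < c := by rw [hc']; linarith
  have hev : ∀ᶠ w in atTop, deriv f w < c' := hm.eventually (gt_mem_nhds hc'm)
  obtain ⟨R₀, hR₀⟩ := eventually_atTop.mp hev
  set R := max R₀ 1 with hR
  have hR1 : (1:ℝ) ≤ R := le_max_right _ _
  have hR0 : (0:ℝ) < R := lt_of_lt_of_le one_pos hR1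
  have hbnd : ∀ w, R < w → f w ≤ f R + c' * (w - R) := by
    intro w hw
    have hcont' : ContinuousOn f (Icc R w) := (hf_cont hB).mono
      (Icc_subset_Ici_self.trans (Ici_subset_Ici.mpr hR0.le))
    obtain ⟨ξ, hξ, hslope⟩ := exists_hasDerivAt_eq_slope f (deriv f) hw hcont'
      (fun v hv => hf_deriv hB (lt_trans hR0 hv.1))
    have hξR : R₀ ≤ ξ := le_trans (le_max_left _ _) hξ.1.le
    have h1 : (f w - f R) / (w - R) < c' := hslope ▸ hR₀ ξ hξR
    have hwR : 0 < w - R := by linarith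
    nlinarith [(div_lt_iff₀ hwR).mp h1]
  -- choose M
  set M := max R ((f R - c' * R - f 0) / (c - c')) + 1 with hM
  have hMR : R < M := by
    have h := le_max_left R ((f R - c' * R - f 0) / (c - c'))
    rw [hM]; linarith
  have hM0 : (0:ℝ) ≤ M := by linarith
  have htail : ∀ w, M ≤ w → f w - c * w ≤ f 0 := by
    intro w hw
    have hRw : R < w := lt_of_lt_of_le hMR hw
    have h1 := hbnd w hRw
    have h2 : (f R - c' * R - f 0) / (c - c') < M := by
      have h := le_max_right R ((f R - c' * R - f 0) / (c - c'))
      rw [hM]; linarith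
    have hcc' : 0 < c - c' := by linarith
    have h3 : f R - c' * R - f 0 < (c - c') * w := by
      have := (div_lt_iff₀ hcc').mp (lt_of_lt_of_le h2 hw)
      linarith
    nlinarith
  obtain ⟨X, hXmem, hXmax⟩ := (isCompact_Icc (a := (0:ℝ)) (b := M)).exists_isMaxOn
    (nonempty_Icc.mpr hM0)
    (ContinuousOn.sub ((hf_cont hB).mono Icc_subset_Ici_self)
      ((continuous_const.mul continuous_id).continuousOn))
  refine ⟨X, hXmem.1, fun w hw => ?_⟩
  have hval : ∀ v, v ∈ Icc 0 M → f v - c * v ≤ f X - c * X := fun v hv => hXmax hv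
  rcases le_or_gt w M with h | h
  · have := hval w ⟨hw, h⟩; simpa using this
  · have h1 := htail w h.le
    have h2 := hval 0 ⟨le_refl _, hM0⟩
    simp only [one_mul]
    nlinarith

lemma Xs_spec : maxAt f c 1 (Xs f c) := zfun_spec (exists_max_one hB hc)

lemma Xs_pos : 0 < Xs f c := max_one_pos hB hc (Xs_spec hB hc)

lemma exists_max {t : ℝ} (ht0 : 0 ≤ t) (ht1 : t ≤ 1) : ∃ z, maxAt f c t z := by
  rcases eq_or_lt_of_le ht1 with h | ht1'
  · exact h ▸ exists_max_one hB hc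
  · -- t < 1 : use coercivity from the Xs bound
    set X := Xs f c with hX
    have hXs := Xs_spec hB hc
    have h1t : 0 < 1 - t := by linarith
    have hXpos := Xs_pos hB hc
    set M := max X ((t * f X - t * c * X - t * f 0) / ((1 - t) * c)) + 1 with hM
    have hMX : X < M := by
      have h := le_max_left X ((t * f X - t * c * X - t * f 0) / ((1 - t) * c))
      rw [hM]; linarith
    have hM0 : (0:ℝ) ≤ M := by linarith
    have htail : ∀ w, M ≤ w → t * f w - c * w ≤ t * f 0 := by
      intro w hw
      have hXw : X < w := lt_of_lt_of_le hMX hw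
      -- f w ≤ f X + c (w - X)
      have h1 : f w - c * w ≤ f X - c * X := by
        have h' := hXs.2 w (by linarith [hXpos])
        simpa using h'
      have h2 : (t * f X - t * c * X - t * f 0) / ((1 - t) * c) < M := by
        have h := le_max_right X ((t * f X - t * c * X - t * f 0) / ((1 - t) * c))
        rw [hM]; linarith
      have hpos : 0 < (1 - t) * c := by positivity
      have h3 : t * f X - t * c * X - t * f 0 < ((1 - t) * c) * w := by
        have := (div_lt_iff₀ hpos).mp (lt_of_lt_of_le h2 hw)
        linarith
      nlinarith
    obtain ⟨z, hzmem, hzmax⟩ := (isCompact_Icc (a := (0:ℝ)) (b := M)).exists_isMaxOn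
      (nonempty_Icc.mpr hM0)
      (ContinuousOn.sub (((hf_cont hB).mono Icc_subset_Ici_self).const_smul t)
        ((continuous_const.mul continuous_id).continuousOn))
    refine ⟨z, hzmem.1, fun w hw => ?_⟩
    have hval : ∀ v, v ∈ Icc 0 M → t * f v - c * v ≤ t * f z - c * z := by
      intro v hv
      have := hzmax hv
      simpa [smul_eq_mul] using this
    rcases le_or_gt w M with h | h
    · exact hval w ⟨hw, h⟩
    · have h1 := htail w h.le
      have h2 := hval 0 ⟨le_refl _, hM0⟩
      simp only [mul_zero] at h2
      linarith

lemma zfun_spec' {t : ℝ} (ht0 : 0 ≤ t) (ht1 : t ≤ 1) : maxAt f c t (zfun f c t) :=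
  zfun_spec (exists_max hB hc ht0 ht1)

lemma zfun_nonneg {t : ℝ} (ht0 : 0 ≤ t) (ht1 : t ≤ 1) : 0 ≤ zfun f c t :=
  (zfun_spec' hB hc ht0 ht1).1

lemma Wf_max {t : ℝ} (ht0 : 0 ≤ t) (ht1 : t ≤ 1) :
    ∀ x, 0 ≤ x → t * f x - c * x ≤ Wf f c t :=
  (zfun_spec' hB hc ht0 ht1).2

/-- uniqueness of the maximizer for positive taste -/
lemma max_unique {t z1 z2 : ℝ} (ht : 0 < t) (h1 : maxAt f c t z1) (h2 : maxAt f c t z2) :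
    z1 = z2 := by
  by_contra hne
  set w := (z1 + z2) / 2 with hw
  have hw0 : 0 ≤ w := by rw [hw]; linarith [h1.1, h2.1]
  have hmem1 : z1 ∈ Ici (0:ℝ) := h1.1
  have hmem2 : z2 ∈ Ici (0:ℝ) := h2.1
  have hfw : (1/2 : ℝ) • f z1 + (1/2 : ℝ) • f z2 < f ((1/2 : ℝ) • z1 + (1/2 : ℝ) • z2) :=
    hB.2.2.1.2 hmem1 hmem2 hne (by norm_num) (by norm_num) (by norm_num)
  simp only [smul_eq_mul] at hfw
  have he : (1/2 : ℝ) * z1 + (1/2 : ℝ) * z2 = w := by rw [hw]; ring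
  rw [he] at hfw
  have hv1 := h1.2 z2 h2.1
  have hv2 := h1.2 w hw0
  have hv3 := h2.2 z1 h1.1
  nlinarith

lemma zfun_zero : zfun f c 0 = 0 := by
  have hex : ∃ z, maxAt f c 0 z := by
    refine ⟨0, le_refl _, fun x hx => ?_⟩
    simp only [zero_mul, zero_sub, mul_zero, neg_zero, sub_zero]
    have : 0 ≤ c * x := by positivity
    linarith
  have hspec := zfun_spec hex
  have h1 := hspec.2 0 (le_refl _)
  simp only [zero_mul, zero_sub, mul_zero, neg_zero, sub_zero] at h1
  have h2 : c * zfun f c 0 ≤ 0 := by linarith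
  have h3 : 0 ≤ zfun f c 0 := hspec.1
  nlinarith

lemma zfun_mono {s t : ℝ} (h0 : 0 ≤ s) (hst : s ≤ t) (ht1 : t ≤ 1) :
    zfun f c s ≤ zfun f c t := by
  rcases eq_or_lt_of_le hst with h | hst'
  · rw [h]
  · set a := zfun f c s
    set b := zfun f c t
    have ha := zfun_spec' hB hc h0 (le_trans hst ht1)
    have hb := zfun_spec' hB hc (le_trans h0 hst) ht1
    have h1 := ha.2 b hb.1
    have h2 := hb.2 a ha.1
    have hfab : f a ≤ f b := by nlinarith
    by_contra hba
    push_neg at hba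
    have := hB.2.1 hb.1 ha.1 hba
    linarith

lemma zfun_le_Xs {t : ℝ} (h0 : 0 ≤ t) (ht1 : t ≤ 1) : zfun f c t ≤ Xs f c :=
  zfun_mono hB hc h0 ht1 (le_refl _)

lemma f_mono_nn {a b : ℝ} (ha : 0 ≤ a) (hab : a ≤ b) : f a ≤ f b :=
  hB.2.1.monotoneOn ha (le_trans ha hab) hab

omit hc in
/-- interior first order condition -/
lemma foc_interior {t s z : ℝ} (hs : 0 ≤ s) (hz : 0 < z)
    (hmax : ∀ u, 0 ≤ u → t * f (u + s) - c * u ≤ t * f (z + s) - c * z) :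
    t * deriv f (z + s) = c := by
  have hzs : 0 < z + s := by linarith
  have hd : HasDerivAt (fun u => t * f (u + s) - c * u) (t * deriv f (z + s) - c) z := by
    have h1 : HasDerivAt (fun u : ℝ => u + s) 1 z := (hasDerivAt_id z).add_const s
    have h2 : HasDerivAt (fun u => f (u + s)) (deriv f (z + s) * 1) z :=
      (hf_deriv hB hzs).comp z h1
    have h3 := (h2.const_mul t).sub ((hasDerivAt_id z).const_mul c)
    have h4 : HasDerivAt (fun u => t * f (u + s) - c * u) (t * (deriv f (z + s) * 1) - c * 1) z := h3
    simpa using h4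
  have hloc : IsLocalMax (fun u => t * f (u + s) - c * u) z := by
    filter_upwards [Ioi_mem_nhds hz] with u hu
    exact hmax u (le_of_lt hu)
  have := hloc.deriv_eq_zero
  rw [hd.deriv] at this
  linarith

omit hc in
/-- corner first order condition -/
lemma foc_corner {t s : ℝ} (hs : 0 < s)
    (hmax : ∀ u, 0 ≤ u → t * f (u + s) - c * u ≤ t * f s) :
    t * deriv f s ≤ c := by
  have hd := hf_deriv hB hs
  have hslope : Tendsto (slope f s) (nhdsWithin s (Ioi s)) (nhds (deriv f s)) :=
    (hasDerivAt_iff_tendsto_slope.mp hd).mono_left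
      (nhdsWithin_mono s (fun u hu => ne_of_gt hu))
  have htend : Tendsto (fun u => t * slope f s u) (nhdsWithin s (Ioi s))
      (nhds (t * deriv f s)) := hslope.const_mul t
  refine le_of_tendsto htend ?_
  apply eventually_nhdsWithin_of_forall
  intro u hu
  have hus : 0 < u - s := by simp at hu; linarith
  have h1 := hmax (u - s) hus.le
  have h2 : u - s + s = u := by ring
  rw [h2] at h1
  rw [slope_def_field]
  have h3 : t * (f u - f s) ≤ c * (u - s) := by linarith
  have h4 : t * ((u - s)⁻¹ * (f u - f s)) ≤ (u-s)⁻¹ * (c * (u-s)) := by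
    rw [mul_comm t, mul_assoc]
    apply mul_le_mul_of_nonneg_left _ (inv_nonneg.mpr hus.le)
    linarith
  calc t * ((f u - f s) / (u - s)) = t * ((u - s)⁻¹ * (f u - f s)) := by ring
    _ ≤ (u-s)⁻¹ * (c * (u-s)) := h4
    _ = c := by field_simp

/-! ### Value function lemmas -/

lemma V_ub {t S : ℝ} (ht0 : 0 ≤ t) (ht1 : t ≤ 1) (hS : 0 ≤ S) :
    ∀ u, 0 ≤ u → t * f (u + S) - c * u ≤ Vf f c t S := by
  intro u hu
  set z := zfun f c t with hzdef
  have hz := zfun_spec' hB hc ht0 ht1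
  rcases le_or_gt S z with h | h
  · rw [Vf, max_eq_right h]
    have := hz.2 (u + S) (by linarith)
    have e : -(c * (z - S)) = - c * z + c * S := by ring
    linarith
  · rw [Vf, max_eq_left h.le]
    have hcp := concave_pair hB (q := z) (A := S) (p := u + S) hz.1 h.le (by linarith)
    have he : u + S + z - S = z + u := by ring
    rw [he] at hcp
    have h2 := hz.2 (z + u) (by linarith [hz.1])
    have h3 : t * (f (u + S) + f z) ≤ t * (f S + f (z + u)) :=
      mul_le_mul_of_nonneg_left hcp ht0
    have e : t * f (max S z) - c * (max S z - S) = t * f S := by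
      rw [max_eq_left h.le]; ring
    nlinarith

lemma V_zero {t : ℝ} (ht0 : 0 ≤ t) (ht1 : t ≤ 1) : Vf f c t 0 = Wf f c t := by
  rw [Vf, max_eq_right (zfun_nonneg hB hc ht0 ht1), Wf]; ring

lemma V_mono {t S S' : ℝ} (ht0 : 0 ≤ t) (ht1 : t ≤ 1) (hS : 0 ≤ S) (h : S ≤ S') :
    Vf f c t S ≤ Vf f c t S' := by
  set z := zfun f c t with hzdef
  have h1 : Vf f c t S = t * f ((max S z - S) + S) - c * (max S z - S) := by
    rw [Vf, ← hzdef, sub_add_cancel]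
  have hx : 0 ≤ max S z - S := by simp
  have h2 : t * f ((max S z - S) + S) ≤ t * f ((max S z - S) + S') := by
    apply mul_le_mul_of_nonneg_left _ ht0
    exact f_mono_nn hB hc (by linarith) (by linarith)
  have h3 := V_ub hB hc ht0 ht1 (le_trans hS h) (max S z - S) hx
  linarith

lemma V_addB {t S B : ℝ} (ht0 : 0 ≤ t) (ht1 : t ≤ 1) (hS : 0 ≤ S) (hBnn : 0 ≤ B) :
    Vf f c t (S + B) ≤ Vf f c t S + c * B := by
  set z := zfun f c t with hzdef
  set x1 := max (S + B) z - (S + B) with hx1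
  have hx1nn : 0 ≤ x1 := by rw [hx1]; simp
  have h1 : Vf f c t (S + B) = t * f ((x1 + B) + S) - c * (x1 + B) + c * B := by
    rw [Vf, hx1]
    have e : max (S + B) z - (S + B) + B + S = max (S+B) z := by ring
    rw [e]; ring
  have h2 := V_ub hB hc ht0 ht1 hS (x1 + B) (by linarith)
  linarith

lemma V_le_lin {t S : ℝ} (ht0 : 0 ≤ t) (ht1 : t ≤ 1) (hS : 0 ≤ S) :
    Vf f c t S ≤ Wf f c t + c * S := by
  have := V_addB hB hc ht0 ht1 (le_refl (0:ℝ)) hS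
  rw [zero_add, V_zero hB hc ht0 ht1] at this
  exact this

lemma V_concave_diff {t A' A B : ℝ} (ht0 : 0 ≤ t) (ht1 : t ≤ 1)
    (hA' : 0 ≤ A') (hA : A' ≤ A) (hBnn : 0 ≤ B) :
    Vf f c t (A + B) + Vf f c t A' ≤ Vf f c t A + Vf f c t (A' + B) := by
  set z := zfun f c t with hzdef
  have hz := zfun_spec' hB hc ht0 ht1
  set p := max (A + B) z with hp
  set q := max A' z with hq
  have hpAB : A + B ≤ p := le_max_left _ _
  have hqA' : A' ≤ q := le_max_left _ _
  have hq0 : 0 ≤ q := le_trans hA' hqA'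
  have hxu : 0 ≤ p - (A + B) := by linarith
  have hxq : 0 ≤ q - A' := by linarith
  have hVAB : Vf f c t (A + B) = t * f p - c * (p - (A + B)) := by rw [Vf]
  have hVA' : Vf f c t A' = t * f q - c * (q - A') := by rw [Vf]
  rcases le_or_gt A q with h | h
  · have i1 : t * f ((q - A) + A) - c * (q - A) ≤ Vf f c t A :=
      V_ub hB hc ht0 ht1 (le_trans hA' hA) (q - A) (by linarith)
    have e1 : q - A + A = q := by ring
    rw [e1] at i1
    have i2 : t * f ((p - A' - B) + (A' + B)) - c * (p - A' - B) ≤ Vf f c t (A' + B) :=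
      V_ub hB hc ht0 ht1 (by linarith) (p - A' - B) (by linarith)
    have e2 : p - A' - B + (A' + B) = p := by ring
    rw [e2] at i2
    linarith
  · have hAp : A ≤ p := by linarith
    have hcp := concave_pair hB (q := q) (A := A) (p := p) hq0 h.le hAp
    have i1 : t * f ((0 : ℝ) + A) - c * 0 ≤ Vf f c t A :=
      V_ub hB hc ht0 ht1 (le_trans hA' hA) 0 (le_refl _)
    rw [zero_add, mul_zero, sub_zero] at i1
    have i2 : t * f (((p - (A+B)) + (q - A')) + (A' + B)) - c * ((p - (A+B)) + (q - A'))
        ≤ Vf f c t (A' + B) :=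
      V_ub hB hc ht0 ht1 (by linarith) _ (by linarith)
    have e2 : (p - (A+B)) + (q - A') + (A' + B) = p + q - A := by ring
    rw [e2] at i2
    have h3 : t * (f p + f q) ≤ t * (f A + f (p + q - A)) :=
      mul_le_mul_of_nonneg_left hcp ht0
    nlinarith

lemma V_corner {t S : ℝ} (h : zfun f c t ≤ S) : Vf f c t S = t * f S := by
  rw [Vf, max_eq_left h]; ring

lemma V_below {t S : ℝ} (h : S ≤ zfun f c t) : Vf f c t S = Wf f c t + c * S := by
  rw [Vf, max_eq_right h, Wf]; ring

omit hB hc in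
lemma V_taste_zero {S : ℝ} (hS : 0 ≤ S) (hz0 : zfun f c 0 = 0) : Vf f c 0 S = 0 := by
  rw [Vf, hz0, max_eq_left hS]; ring

lemma W_zero : Wf f c 0 = 0 := by
  rw [Wf, zfun_zero hB hc]; ring

lemma D_zero : Df f c 0 = 0 := by
  rw [Df, W_zero hB hc]; ring

lemma D_ge_cz {t : ℝ} (ht0 : 0 ≤ t) (ht1 : t ≤ 1) :
    c * zfun f c t ≤ Df f c t := by
  rw [Df, Wf]
  have h1 : f (zfun f c t) ≤ f (Xs f c) :=
    f_mono_nn hB hc (zfun_nonneg hB hc ht0 ht1) (zfun_le_Xs hB hc ht0 ht1)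
  nlinarith

lemma D_nonneg {t : ℝ} (ht0 : 0 ≤ t) (ht1 : t ≤ 1) : 0 ≤ Df f c t := by
  have h1 := D_ge_cz hB hc ht0 ht1
  have h2 := zfun_nonneg hB hc ht0 ht1
  nlinarith

lemma V_at_Xs {t : ℝ} (ht0 : 0 ≤ t) (ht1 : t ≤ 1) :
    Vf f c t (Xs f c) = Wf f c t + Df f c t := by
  rw [V_corner hB hc (zfun_le_Xs hB hc ht0 ht1), Df]; ring

/-! ### Game lemmas -/

section Game

variable {n : ℕ} {t : Fin n → ℝ} {k : ℝ} {x y : Fin n → ℝ} {g : Fin n → Fin n → Bool}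

omit hB hc in
lemma spill_nonneg' (hx : ∀ m, 0 ≤ x m) (gi : Fin n → Bool) :
    0 ≤ ∑ m, if gi m then x m else 0 := by
  apply Finset.sum_nonneg
  intro m _
  by_cases h : gi m <;> simp [h, hx m]

omit hB hc in
lemma spill_upd {l : Fin n} {gi : Fin n → Bool} (hgil : gi l = false) (xi : ℝ) :
    spill (Function.update x l xi) (updLinks g l gi) l = ∑ m, if gi m then x m else 0 := by
  rw [spill]
  apply Finset.sum_congr rfl
  intro m _
  rw [updLinks, if_pos rfl, Function.update_apply]
  by_cases hm : m = l
  · subst hm; rw [hgil]; simp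
  · simp [hm]

omit hB hc in
lemma nlinks_upd {l : Fin n} (gi : Fin n → Bool) :
    nlinks (updLinks g l gi) l = ∑ m, if gi m then (1:ℝ) else 0 := by
  rw [nlinks]
  apply Finset.sum_congr rfl
  intro m _
  rw [updLinks, if_pos rfl]

variable (hNE : NashEq t f c k x y g)

include hNE

/-- any "linking + optimal contributions" deviation payoff is dominated in equilibrium -/
lemma dev_le {l : Fin n} (ht0 : 0 ≤ t l) (ht1 : t l ≤ 1)
    (gi : Fin n → Bool) (hgil : gi l = false) :
    Vf f c (t l) (∑ m, if gi m then x m else 0)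
      + Vf f c (1 - t l) (∑ m, if gi m then y m else 0)
      - (∑ m, if gi m then (1:ℝ) else 0) * k
      ≤ payoff t f c k x y g l := by
  set Sx := ∑ m, if gi m then x m else 0 with hSx
  set Sy := ∑ m, if gi m then y m else 0 with hSy
  have hSx0 : 0 ≤ Sx := spill_nonneg' hNE.1 gi
  have hSy0 : 0 ≤ Sy := spill_nonneg' hNE.2.1 gi
  set xi := max Sx (zfun f c (t l)) - Sx with hxi
  set yi := max Sy (zfun f c (1 - t l)) - Sy with hyi
  have hxi0 : 0 ≤ xi := by rw [hxi]; simp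
  have hyi0 : 0 ≤ yi := by rw [hyi]; simp
  have hkey := hNE.2.2.2 l xi yi gi hxi0 hyi0 hgil
  have hpay : payoff t f c k (Function.update x l xi) (Function.update y l yi)
      (updLinks g l gi) l
      = Vf f c (t l) Sx + Vf f c (1 - t l) Sy - (∑ m, if gi m then (1:ℝ) else 0) * k := by
    rw [payoff, spill_upd hgil, spill_upd hgil, nlinks_upd,
      Function.update_self, Function.update_self]
    rw [← hSx, ← hSy]
    have e1 : xi + Sx = max Sx (zfun f c (t l)) := by rw [hxi]; ring
    have e2 : yi + Sy = max Sy (zfun f c (1 - t l)) := by rw [hyi]; ring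
    rw [e1, e2, Vf, Vf, hxi, hyi]
    ring
  rw [hpay] at hkey
  exact hkey

/-- in equilibrium, each player's payoff equals the value of her link portfolio -/
lemma payoff_eq {l : Fin n} (ht0 : 0 ≤ t l) (ht1 : t l ≤ 1) :
    payoff t f c k x y g l
      = Vf f c (t l) (spill x g l) + Vf f c (1 - t l) (spill y g l) - nlinks g l * k := by
  have h1 : payoff t f c k x y g l ≤ Vf f c (t l) (spill x g l)
      + Vf f c (1 - t l) (spill y g l) - nlinks g l * k := by
    rw [payoff]
    have hSx0 : 0 ≤ spill x g l := spill_nonneg' hNE.1 _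
    have hSy0 : 0 ≤ spill y g l := spill_nonneg' hNE.2.1 _
    have i1 := V_ub hB hc ht0 ht1 hSx0 (x l) (hNE.1 l)
    have i2 := V_ub hB hc (show (0:ℝ) ≤ 1 - t l by linarith)
      (show (1:ℝ) - t l ≤ 1 by linarith) hSy0 (y l) (hNE.2.1 l)
    linarith
  have h2 := dev_le hB hc hNE ht0 ht1 (g l) (hNE.2.2.1 l)
  rw [← spill, ← spill, ← nlinks] at h2
  exact le_antisymm h1 h2

end Game

/-! ### More game lemmas -/

section Game2

variable {n : ℕ} {t : Fin n → ℝ} {k : ℝ} {x y : Fin n → ℝ} {g : Fin n → Fin n → Bool}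

omit hB hc in
lemma updLinks_self (g : Fin n → Fin n → Bool) (l : Fin n) : updLinks g l (g l) = g := by
  funext a b
  rw [updLinks]
  by_cases h : a = l
  · subst h; simp
  · rw [if_neg h]

omit hB hc in
lemma sum_single {α : Type*} [Fintype α] [DecidableEq α] (P : α → Bool) (a : α) (w : α → ℝ) :
    ∑ m, (if P m && decide (m = a) then w m else 0) = if P a then w a else 0 := by
  have h : ∀ m : α, (if P m && decide (m = a) then w m else 0)
      = if m = a then (if P m then w m else 0) else 0 := by
    intro m
    by_cases h1 : m = a <;> by_cases h2 : P m <;> simp [h1, h2]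
  rw [Finset.sum_congr rfl (fun m _ => h m), Finset.sum_ite_eq' Finset.univ a]
  simp

omit hB hc in
lemma sum_pair_support {α : Type*} [Fintype α] [DecidableEq α] (w : α → ℝ) (P : α → Bool)
    {a b : α} (hab : a ≠ b) (hsupp : ∀ m, P m = true → m = a ∨ m = b) :
    ∑ m, (if P m then w m else 0) = (if P a then w a else 0) + (if P b then w b else 0) := by
  have h1 : ({a, b} : Finset α) ⊆ Finset.univ := Finset.subset_univ _
  have h2 : ∀ m ∈ Finset.univ, m ∉ ({a, b} : Finset α) → (if P m then w m else 0) = 0 := by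
    intro m _ hm
    simp only [Finset.mem_insert, Finset.mem_singleton] at hm
    push_neg at hm
    have : P m = false := by
      by_contra hP
      rcases hsupp m (by simpa using hP) with h | h
      · exact hm.1 h
      · exact hm.2 h
    rw [this]; simp
  rw [← Finset.sum_subset h1 h2, Finset.sum_pair hab]

variable (hNE : NashEq t f c k x y g)
include hNE

omit hB hc in
lemma own_opt_x (l : Fin n) :
    ∀ u, 0 ≤ u → t l * f (u + spill x g l) - c * u ≤ t l * f (x l + spill x g l) - c * x l := by
  intro u hu
  have hkey := hNE.2.2.2 l u (y l) (g l) hu (hNE.2.1 l) (hNE.2.2.1 l)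
  rw [payoff, payoff] at hkey
  rw [updLinks_self] at hkey
  have e1 : Function.update x l u l = u := Function.update_self l u x
  have e2 : Function.update y l (y l) = y := Function.update_eq_self l y
  rw [e1, e2] at hkey
  have e3 : spill (Function.update x l u) g l = spill x g l := by
    rw [spill, spill]
    apply Finset.sum_congr rfl
    intro m _
    by_cases hm : m = l
    · rw [hm, hNE.2.2.1 l]; simp
    · rw [Function.update_apply, if_neg hm]
  rw [e3] at hkey
  linarith

omit hB hc in
lemma own_opt_y (l : Fin n) :
    ∀ u, 0 ≤ u → (1 - t l) * f (u + spill y g l) - c * u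
      ≤ (1 - t l) * f (y l + spill y g l) - c * y l := by
  intro u hu
  have hkey := hNE.2.2.2 l (x l) u (g l) (hNE.1 l) hu (hNE.2.2.1 l)
  rw [payoff, payoff] at hkey
  rw [updLinks_self] at hkey
  have e1 : Function.update y l u l = u := Function.update_self l u y
  have e2 : Function.update x l (x l) = x := Function.update_eq_self l x
  rw [e1, e2] at hkey
  have e3 : spill (Function.update y l u) g l = spill y g l := by
    rw [spill, spill]
    apply Finset.sum_congr rfl
    intro m _
    by_cases hm : m = l
    · rw [hm, hNE.2.2.1 l]; simp
    · rw [Function.update_apply, if_neg hm]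
  rw [e3] at hkey
  linarith

end Game2

/-! ### Main construction -/

section Main

variable {n : ℕ}

lemma main_aux
    (t : Fin n → ℝ) (hT : TypeAssumptions t)
    (k : ℝ) (hk : 0 < k)
    (x y : Fin n → ℝ) (g : Fin n → Fin n → Bool)
    (hNE : NashEq t f c k x y g)
    (i j : Fin n) (hij : i ≠ j)
    (hall : ∀ l, isContributor g l → l = i ∨ l = j)
    (hgij : g i j = true) (hgji : g j i = true)
    (i0 i1 : Fin n) (ht0 : t i0 = 0) (ht1 : t i1 = 1)
    (hxi : 0 < x i) (hyi : y i = 0) (hxj : x j = 0) (hyj : 0 < y j) :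
    ∃ (x' y' : Fin n → ℝ) (g' : Fin n → Fin n → Bool),
      NashEq t f c k x' y' g' ∧
      (∀ l, isContributor g' l → ∀ m, g' l m = false) ∧
      (∀ l, isContributor g' l ↔ (l = i0 ∨ l = i1)) ∧
      ∑ l, payoff t f c k x y g l < ∑ l, payoff t f c k x' y' g' l := by
  classical
  obtain ⟨hinj, hmem, -, -⟩ := hT
  have h01 : ∀ l, 0 ≤ t l ∧ t l ≤ 1 := fun l => ⟨(hmem l).1, (hmem l).2⟩
  have hx0 := hNE.1
  have hy0 := hNE.2.1
  have hgll := hNE.2.2.1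
  have hsupp : ∀ l m, g l m = true → m = i ∨ m = j := fun l m h => hall m ⟨l, h⟩
  -- equilibrium spills
  have hspx : ∀ l, spill x g l = if g l i then x i else 0 := by
    intro l
    simp only [spill]
    rw [sum_pair_support x (g l) hij (hsupp l), hxj]
    simp
  have hspy : ∀ l, spill y g l = if g l j then y j else 0 := by
    intro l
    simp only [spill]
    rw [sum_pair_support y (g l) hij (hsupp l), hyi]
    simp
  have hnl : ∀ l, nlinks g l
      = (if g l i then (1:ℝ) else 0) + (if g l j then (1:ℝ) else 0) := by
    intro l
    simp only [nlinks]
    rw [sum_pair_support (fun _ => (1:ℝ)) (g l) hij (hsupp l)]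
  have hsxi : spill x g i = 0 := by rw [hspx i, hgll i]; simp
  have hsyi : spill y g i = y j := by rw [hspy i, hgij]; simp
  have hsxj : spill x g j = x i := by rw [hspx j, hgji]; simp
  have hsyj : spill y g j = 0 := by rw [hspy j, hgll j]; simp
  -- own contribution optimality
  have hmaxi : maxAt f c (t i) (x i) := by
    refine ⟨hx0 i, fun u hu => ?_⟩
    have h := own_opt_x hNE i u hu
    rw [hsxi, add_zero, add_zero] at h
    exact h
  have hmaxj : maxAt f c (1 - t j) (y j) := by
    refine ⟨hy0 j, fun u hu => ?_⟩
    have h := own_opt_y hNE j u hu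
    rw [hsyj, add_zero, add_zero] at h
    exact h
  -- first order conditions
  have hfoci : t i * deriv f (x i) = c := by
    have h := foc_interior hB (le_refl (0:ℝ)) hxi (fun u hu => by
      rw [add_zero, add_zero]; exact hmaxi.2 u hu)
    rw [add_zero] at h
    exact h
  have hfocj : (1 - t j) * deriv f (y j) = c := by
    have h := foc_interior hB (le_refl (0:ℝ)) hyj (fun u hu => by
      rw [add_zero, add_zero]; exact hmaxj.2 u hu)
    rw [add_zero] at h
    exact h
  have htipos : 0 < t i := by
    rcases lt_or_eq_of_le (h01 i).1 with h | h
    · exact h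
    · exfalso; rw [← h, zero_mul] at hfoci; linarith
  have htjlt1 : t j < 1 := by
    rcases lt_or_eq_of_le (h01 j).2 with h | h
    · exact h
    · exfalso
      rw [h] at hfocj; simp at hfocj; linarith
  have hax : x i = zfun f c (t i) :=
    max_unique hB hc htipos hmaxi (zfun_spec' hB hc (h01 i).1 (h01 i).2)
  have hay : y j = zfun f c (1 - t j) :=
    max_unique hB hc (by linarith) hmaxj
      (zfun_spec' hB hc (by linarith [(h01 j).2]) (by linarith [(h01 j).1]))
  -- payoff formula
  have hP : ∀ l, payoff t f c k x y g l
      = Vf f c (t l) (if g l i then x i else 0)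
        + Vf f c (1 - t l) (if g l j then y j else 0)
        - ((if g l i then (1:ℝ) else 0) + (if g l j then (1:ℝ) else 0)) * k := by
    intro l
    rw [payoff_eq hB hc hNE (h01 l).1 (h01 l).2, hspx l, hspy l, hnl l]
  -- no-link deviation for i : k ≤ gain from y-access
  have hdevnil : ∀ l, Wf f c (t l) + Wf f c (1 - t l) ≤ payoff t f c k x y g l := by
    intro l
    have hdev := dev_le hB hc hNE (h01 l).1 (h01 l).2 (fun _ => false) rfl
    simp only [Bool.false_eq_true, if_false, Finset.sum_const_zero, zero_mul, sub_zero] at hdev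
    rw [V_zero hB hc (h01 l).1 (h01 l).2,
      V_zero hB hc (by linarith [(h01 l).2]) (by linarith [(h01 l).1])] at hdev
    exact hdev
  have hki : k ≤ Vf f c (1 - t i) (y j) - Wf f c (1 - t i) := by
    have h1 := hP i
    rw [hgll i, hgij] at h1
    simp only [Bool.false_eq_true, if_false, if_true] at h1
    have h2 := hdevnil i
    rw [h1, V_zero hB hc (h01 i).1 (h01 i).2] at h2
    linarith
  have hkj : k ≤ Vf f c (t j) (x i) - Wf f c (t j) := by
    have h1 := hP j
    rw [hgll j, hgji] at h1
    simp only [Bool.false_eq_true, if_false, if_true] at h1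
    have h2 := hdevnil j
    rw [h1, V_zero hB hc (by linarith [(h01 j).2]) (by linarith [(h01 j).1])] at h2
    linarith
  have htilt1 : t i < 1 := by
    rcases lt_or_eq_of_le (h01 i).2 with h | h
    · exact h
    · exfalso
      have hv : Vf f c (1 - t i) (y j) = 0 := by
        rw [h, sub_self]; exact V_taste_zero (hy0 j) (zfun_zero hB hc)
      have hw : Wf f c (1 - t i) = 0 := by rw [h, sub_self]; exact W_zero hB hc
      rw [hv, hw] at hki; linarith
  have htjpos : 0 < t j := by
    rcases lt_or_eq_of_le (h01 j).1 with h | h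
    · exact h
    · exfalso
      have hv : Vf f c (t j) (x i) = 0 := by
        rw [← h]; exact V_taste_zero (hx0 i) (zfun_zero hB hc)
      have hw : Wf f c (t j) = 0 := by rw [← h]; exact W_zero hB hc
      rw [hv, hw] at hkj; linarith
  -- t j < t i
  have hfpos : 0 < deriv f (x i) := by
    by_contra hd
    push_neg at hd
    nlinarith
  have hcornerj : t j * deriv f (x i) ≤ c := by
    apply foc_corner hB hxi
    intro u hu
    have h := own_opt_x hNE j u hu
    rw [hsxj, hxj, zero_add, mul_zero, sub_zero] at h
    exact h
  have htjti : t j < t i := by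
    have h1 : t j ≤ t i := by nlinarith
    rcases lt_or_eq_of_le h1 with h | h
    · exact h
    · exact absurd (hinj h) (Ne.symm hij)
  -- y j < Xs
  have hXpos := Xs_pos hB hc
  have hXspec := Xs_spec hB hc
  have hfocX : deriv f (Xs f c) = c := by
    have h := foc_interior hB (le_refl (0:ℝ)) hXpos (fun u hu => by
      rw [add_zero, add_zero]; exact hXspec.2 u hu)
    rw [add_zero, one_mul] at h
    exact h
  have hayX : y j < Xs f c := by
    have hle : y j ≤ Xs f c := by
      rw [hay]
      exact zfun_le_Xs hB hc (by linarith) (by linarith)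
    rcases lt_or_eq_of_le hle with h | h
    · exact h
    · exfalso
      rw [h, hfocX] at hfocj
      nlinarith
  have haxX : x i ≤ Xs f c := by
    rw [hax]; exact zfun_le_Xs hB hc (h01 i).1 (h01 i).2
  -- k ≤ D bounds
  have hkDi : k ≤ Df f c (1 - t i) := by
    have h2 : Vf f c (1 - t i) (y j) ≤ Vf f c (1 - t i) (Xs f c) :=
      V_mono hB hc (by linarith) (by linarith) (hy0 j) hayX.le
    rw [V_at_Xs hB hc (by linarith) (by linarith)] at h2
    linarith
  have hkDj : k ≤ Df f c (t j) := by
    have h2 : Vf f c (t j) (x i) ≤ Vf f c (t j) (Xs f c) :=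
      V_mono hB hc (h01 j).1 (h01 j).2 (hx0 i) haxX
    rw [V_at_Xs hB hc (h01 j).1 (h01 j).2] at h2
    linarith
  -- distinctness
  have hii0 : i ≠ i0 := fun h => by rw [h, ht0] at htipos; exact lt_irrefl _ htipos
  have hii1 : i ≠ i1 := fun h => by rw [h, ht1] at htilt1; exact lt_irrefl _ htilt1
  have hji0 : j ≠ i0 := fun h => by rw [h, ht0] at htjpos; exact lt_irrefl _ htjpos
  have hji1 : j ≠ i1 := fun h => by rw [h, ht1] at htjlt1; exact lt_irrefl _ htjlt1
  have hi01 : i0 ≠ i1 := fun h => by rw [h, ht1] at ht0; norm_num at ht0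
  -- link implies gain bounds
  have hlinkgain_x : ∀ l, g l i = true → k ≤ Vf f c (t l) (x i) - Wf f c (t l) := by
    intro l hli
    have hdev := dev_le hB hc hNE (h01 l).1 (h01 l).2
      (fun m => g l m && !(decide (m = i))) (by simp [hgll l])
    have hsub : ∀ m, (g l m && !(decide (m = i))) = true → m = i ∨ m = j := by
      intro m hm
      rw [Bool.and_eq_true] at hm
      exact hsupp l m hm.1
    rw [sum_pair_support x _ hij hsub, sum_pair_support y _ hij hsub,
      sum_pair_support (fun _ => (1:ℝ)) _ hij hsub] at hdev
    have hPi : (g l i && !(decide (i = i))) = false := by simp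
    have hPj : (g l j && !(decide (j = i))) = g l j := by
      have hd : decide (j = i) = false := decide_eq_false (Ne.symm hij)
      rw [hd]; simp
    rw [hPi, hPj] at hdev
    simp only [Bool.false_eq_true, if_false, hxj, hyi, add_zero, zero_add, ite_self] at hdev
    rw [V_zero hB hc (h01 l).1 (h01 l).2] at hdev
    have h1 := hP l
    simp only [hli, if_true] at h1
    rw [h1] at hdev
    linarith
  have hlinkgain_y : ∀ l, g l j = true → k ≤ Vf f c (1 - t l) (y j) - Wf f c (1 - t l) := by
    intro l hlj
    have hdev := dev_le hB hc hNE (h01 l).1 (h01 l).2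
      (fun m => g l m && !(decide (m = j))) (by simp [hgll l])
    have hsub : ∀ m, (g l m && !(decide (m = j))) = true → m = i ∨ m = j := by
      intro m hm
      rw [Bool.and_eq_true] at hm
      exact hsupp l m hm.1
    rw [sum_pair_support x _ hij hsub, sum_pair_support y _ hij hsub,
      sum_pair_support (fun _ => (1:ℝ)) _ hij hsub] at hdev
    have hPj : (g l j && !(decide (j = j))) = false := by simp
    have hPi : (g l i && !(decide (i = j))) = g l i := by
      have hd : decide (i = j) = false := decide_eq_false hij
      rw [hd]; simp
    rw [hPi, hPj] at hdev
    simp only [Bool.false_eq_true, if_false, hxj, hyi, add_zero, zero_add, ite_self] at hdev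
    rw [V_zero hB hc (by linarith [(h01 l).2] : (0:ℝ) ≤ 1 - t l)
      (by linarith [(h01 l).1] : (1:ℝ) - t l ≤ 1)] at hdev
    have h1 := hP l
    simp only [hlj, if_true] at h1
    rw [h1] at hdev
    linarith
  
  -- ###构 construction of the independent equilibrium
  set X := Xs f c with hXdef
  set bx : Fin n → Bool := fun l => decide (k ≤ Df f c (t l)) with hbx
  set byl : Fin n → Bool := fun l => decide (k ≤ Df f c (1 - t l)) with hbyl
  set g' : Fin n → Fin n → Bool := fun l m =>
    if l = i0 ∨ l = i1 then false
    else if m = i1 then bx l else if m = i0 then byl l else false with hg'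
  set x' : Fin n → ℝ := fun l =>
    if l = i1 then X else if l = i0 then 0 else if bx l then 0 else zfun f c (t l) with hx'
  set y' : Fin n → ℝ := fun l =>
    if l = i0 then X else if l = i1 then 0 else if byl l then 0 else zfun f c (1 - t l) with hy'
  have hbxT : ∀ l, bx l = true ↔ k ≤ Df f c (t l) := by intro l; rw [hbx]; simp
  have hbylT : ∀ l, byl l = true ↔ k ≤ Df f c (1 - t l) := by intro l; rw [hbyl]; simp
  have hbxF : ∀ l, bx l = false ↔ Df f c (t l) < k := by
    intro l; rw [hbx]; simp [not_le]
  have hbylF : ∀ l, byl l = false ↔ Df f c (1 - t l) < k := by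
    intro l; rw [hbyl]; simp [not_le]
  have hx'i1 : x' i1 = X := by rw [hx']; simp
  have hx'i0 : x' i0 = 0 := by rw [hx']; simp [hi01]
  have hy'i0 : y' i0 = X := by rw [hy']; simp
  have hy'i1 : y' i1 = 0 := by rw [hy']; simp [Ne.symm hi01]
  have hx'l : ∀ l, l ≠ i0 → l ≠ i1 → x' l = if bx l then 0 else zfun f c (t l) := by
    intro l h0 h1; rw [hx']; simp [h0, h1]
  have hy'l : ∀ l, l ≠ i0 → l ≠ i1 → y' l = if byl l then 0 else zfun f c (1 - t l) := by
    intro l h0 h1; rw [hy']; simp [h0, h1]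
  have hXnn : (0:ℝ) ≤ X := hXpos.le
  have hx'nn : ∀ l, 0 ≤ x' l := by
    intro l
    by_cases h1 : l = i1
    · rw [h1, hx'i1]; exact hXnn
    by_cases h0 : l = i0
    · rw [h0, hx'i0]
    rw [hx'l l h0 h1]
    by_cases hb : bx l
    · simp [hb]
    · simp [hb]; exact zfun_nonneg hB hc (h01 l).1 (h01 l).2
  have hy'nn : ∀ l, 0 ≤ y' l := by
    intro l
    by_cases h0 : l = i0
    · rw [h0, hy'i0]; exact hXnn
    by_cases h1 : l = i1
    · rw [h1, hy'i1]
    rw [hy'l l h0 h1]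
    by_cases hb : byl l
    · simp [hb]
    · simp [hb]
      exact zfun_nonneg hB hc (by linarith [(h01 l).2]) (by linarith [(h01 l).1])
  have hg'row0 : ∀ m, g' i0 m = false := by intro m; rw [hg']; simp
  have hg'row1 : ∀ m, g' i1 m = false := by intro m; rw [hg']; simp
  have hg'self : ∀ l, g' l l = false := by
    intro l
    by_cases h : l = i0 ∨ l = i1
    · rw [hg']; simp [h]
    · push_neg at h
      rw [hg']
      simp [h.1, h.2]
  have hg'm : ∀ l m, g' l m = true → (¬l = i0 ∧ ¬l = i1) ∧ (m = i0 ∨ m = i1) := by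
    intro l m hlm
    by_cases h : l = i0 ∨ l = i1
    · rw [hg'] at hlm; simp [h] at hlm
    · push_neg at h
      refine ⟨⟨h.1, h.2⟩, ?_⟩
      by_cases hm1 : m = i1
      · right; exact hm1
      by_cases hm0 : m = i0
      · left; exact hm0
      · rw [hg'] at hlm; simp [h.1, h.2, hm1, hm0] at hlm
  have hg'li1 : ∀ l, l ≠ i0 → l ≠ i1 → g' l i1 = bx l := by
    intro l h0 h1; rw [hg']; simp [h0, h1]
  have hg'li0 : ∀ l, l ≠ i0 → l ≠ i1 → g' l i0 = byl l := by
    intro l h0 h1; rw [hg']; simp [h0, h1, hi01]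
  have hspx' : ∀ l, spill x' g' l
      = (if g' l i0 then x' i0 else 0) + (if g' l i1 then x' i1 else 0) := by
    intro l
    simp only [spill]
    exact sum_pair_support x' (g' l) hi01 (fun m hm => (hg'm l m hm).2)
  have hspy' : ∀ l, spill y' g' l
      = (if g' l i0 then y' i0 else 0) + (if g' l i1 then y' i1 else 0) := by
    intro l
    simp only [spill]
    exact sum_pair_support y' (g' l) hi01 (fun m hm => (hg'm l m hm).2)
  have hnl' : ∀ l, nlinks g' l
      = (if g' l i0 then (1:ℝ) else 0) + (if g' l i1 then (1:ℝ) else 0) := by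
    intro l
    simp only [nlinks]
    exact sum_pair_support (fun _ => (1:ℝ)) (g' l) hi01 (fun m hm => (hg'm l m hm).2)
  have hsx'l : ∀ l, l ≠ i0 → l ≠ i1 → spill x' g' l = if bx l then X else 0 := by
    intro l h0 h1
    rw [hspx' l, hg'li0 l h0 h1, hg'li1 l h0 h1, hx'i0, hx'i1]
    simp
  have hsy'l : ∀ l, l ≠ i0 → l ≠ i1 → spill y' g' l = if byl l then X else 0 := by
    intro l h0 h1
    rw [hspy' l, hg'li0 l h0 h1, hg'li1 l h0 h1, hy'i0, hy'i1]
    simp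
  have hnl'l : ∀ l, l ≠ i0 → l ≠ i1 → nlinks g' l
      = (if byl l then (1:ℝ) else 0) + (if bx l then (1:ℝ) else 0) := by
    intro l h0 h1
    rw [hnl' l, hg'li0 l h0 h1, hg'li1 l h0 h1]
  -- payoff formulas in the new profile
  have htX : ∀ s, 0 ≤ s → s ≤ 1 → s * f X = Wf f c s + Df f c s := by
    intro s _ _
    rw [Df, hXdef]; ring
  have hP' : ∀ l, l ≠ i0 → l ≠ i1 → payoff t f c k x' y' g' l
      = Wf f c (t l) + Wf f c (1 - t l)
        + max (Df f c (t l) - k) 0 + max (Df f c (1 - t l) - k) 0 := by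
    intro l h0 h1
    have ht0l := (h01 l).1
    have ht1l := (h01 l).2
    have ht0l' : (0:ℝ) ≤ 1 - t l := by linarith
    have ht1l' : (1:ℝ) - t l ≤ 1 := by linarith
    simp only [payoff]
    rw [hsx'l l h0 h1, hsy'l l h0 h1, hnl'l l h0 h1, hx'l l h0 h1, hy'l l h0 h1]
    have hxpart : t l * f ((if bx l then 0 else zfun f c (t l)) + (if bx l then X else 0))
        - c * (if bx l then 0 else zfun f c (t l))
        = Wf f c (t l) + (if bx l then Df f c (t l) else 0) := by
      by_cases hb : bx l
      · simp only [hb, if_true, zero_add, mul_zero, sub_zero]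
        rw [htX (t l) ht0l ht1l]
      · have hb' : bx l = false := by simpa using hb
        simp only [hb', Bool.false_eq_true, if_false, add_zero]
        rw [Wf]
    have hypart : (1 - t l) * f ((if byl l then 0 else zfun f c (1 - t l)) + (if byl l then X else 0))
        - c * (if byl l then 0 else zfun f c (1 - t l))
        = Wf f c (1 - t l) + (if byl l then Df f c (1 - t l) else 0) := by
      by_cases hb : byl l
      · simp only [hb, if_true, zero_add, mul_zero, sub_zero]
        rw [htX (1 - t l) ht0l' ht1l']
      · have hb' : byl l = false := by simpa using hb
        simp only [hb', Bool.false_eq_true, if_false, add_zero]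
        rw [Wf]
    have hmaxx : max (Df f c (t l) - k) 0 = if bx l then Df f c (t l) - k else 0 := by
      by_cases hb : bx l
      · rw [if_pos hb]; exact max_eq_left (by linarith [(hbxT l).mp hb])
      · have hb' : bx l = false := by simpa using hb
        rw [hb']; simp only [Bool.false_eq_true, if_false]
        exact max_eq_right (by linarith [(hbxF l).mp hb'])
    have hmaxy : max (Df f c (1 - t l) - k) 0 = if byl l then Df f c (1 - t l) - k else 0 := by
      by_cases hb : byl l
      · rw [if_pos hb]; exact max_eq_left (by linarith [(hbylT l).mp hb])
      · have hb' : byl l = false := by simpa using hb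
        rw [hb']; simp only [Bool.false_eq_true, if_false]
        exact max_eq_right (by linarith [(hbylF l).mp hb'])
    rw [hmaxx, hmaxy]
    by_cases hb : bx l <;> by_cases hb2 : byl l <;>
      simp only [hb, hb2, Bool.false_eq_true, if_true, if_false] at hxpart hypart ⊢ <;>
      linarith [hxpart, hypart]
  
  have hW1 : Wf f c 1 = f X - c * X := by rw [Wf, hXdef, Xs]; ring
  have hsp0 : ∀ w : Fin n → ℝ, spill w g' i0 = 0 := by
    intro w
    simp only [spill]
    apply Finset.sum_eq_zero
    intro m _
    rw [hg'row0 m]; simp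
  have hsp1 : ∀ w : Fin n → ℝ, spill w g' i1 = 0 := by
    intro w
    simp only [spill]
    apply Finset.sum_eq_zero
    intro m _
    rw [hg'row1 m]; simp
  have hnl0 : nlinks g' i0 = 0 := by
    simp only [nlinks]
    apply Finset.sum_eq_zero
    intro m _
    rw [hg'row0 m]; simp
  have hnl1 : nlinks g' i1 = 0 := by
    simp only [nlinks]
    apply Finset.sum_eq_zero
    intro m _
    rw [hg'row1 m]; simp
  have hP'i1 : payoff t f c k x' y' g' i1 = Wf f c 1 := by
    simp only [payoff]
    rw [hsp1 x', hsp1 y', hnl1, hx'i1, hy'i1, ht1, hW1]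
    ring
  have hP'i0 : payoff t f c k x' y' g' i0 = Wf f c 1 := by
    simp only [payoff]
    rw [hsp0 x', hsp0 y', hnl0, hx'i0, hy'i0, ht0, hW1]
    ring
  -- per-target cheap bounds for links to non-specialists
  have hcx' : ∀ m, m ≠ i1 → c * x' m ≤ k := by
    intro m hm1
    by_cases hm0 : m = i0
    · rw [hm0, hx'i0, mul_zero]; exact hk.le
    · rw [hx'l m hm0 hm1]
      by_cases hb : bx m
      · simp [hb]; exact hk.le
      · have hb' : bx m = false := by simpa using hb
        rw [if_neg (by simp [hb'])]
        have h1 := D_ge_cz hB hc (h01 m).1 (h01 m).2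
        have h2 := (hbxF m).mp hb'
        linarith
  have hcy' : ∀ m, m ≠ i0 → c * y' m ≤ k := by
    intro m hm0
    by_cases hm1 : m = i1
    · rw [hm1, hy'i1, mul_zero]; exact hk.le
    · rw [hy'l m hm0 hm1]
      by_cases hb : byl m
      · simp [hb]; exact hk.le
      · have hb' : byl m = false := by simpa using hb
        rw [if_neg (by simp [hb'])]
        have h1 := D_ge_cz hB hc (by linarith [(h01 m).2] : (0:ℝ) ≤ 1 - t m)
          (by linarith [(h01 m).1] : (1:ℝ) - t m ≤ 1)
        have h2 := (hbylF m).mp hb'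
        linarith
  
  -- ### the new profile is a Nash equilibrium
  have hNE' : NashEq t f c k x' y' g' := by
    refine ⟨hx'nn, hy'nn, hg'self, ?_⟩
    intro l xi yi gi hxi0' hyi0' hgil
    have hshape : payoff t f c k (Function.update x' l xi) (Function.update y' l yi)
        (updLinks g' l gi) l
        = t l * f (xi + ∑ m, if gi m then x' m else 0)
          + (1 - t l) * f (yi + ∑ m, if gi m then y' m else 0)
          - c * (xi + yi) - (∑ m, if gi m then (1:ℝ) else 0) * k := by
      simp only [payoff]
      rw [spill_upd hgil, spill_upd hgil, nlinks_upd, Function.update_self,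
        Function.update_self]
    rw [hshape]
    have hSx0 : 0 ≤ ∑ m, if gi m then x' m else 0 := spill_nonneg' hx'nn gi
    have hSy0 : 0 ≤ ∑ m, if gi m then y' m else 0 := spill_nonneg' hy'nn gi
    by_cases hl1 : l = i1
    · rw [hl1] at hgil ⊢
      rw [hP'i1, ht1]
      have hb1 : c * (∑ m, if gi m then x' m else 0)
          ≤ (∑ m, if gi m then (1:ℝ) else 0) * k := by
        rw [Finset.mul_sum, Finset.sum_mul]
        apply Finset.sum_le_sum
        intro m _
        by_cases hgm : gi m
        · simp only [hgm, if_true, one_mul]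
          have hmne : m ≠ i1 := by
            intro h; rw [h, hgil] at hgm; simp at hgm
          exact hcx' m hmne
        · simp [hgm]
      have h1 := V_ub hB hc zero_le_one le_rfl hSx0 xi hxi0'
      have h2 := V_le_lin hB hc zero_le_one le_rfl hSx0
      have h3 : (0:ℝ) ≤ c * yi := mul_nonneg hc.le hyi0'
      simp only [sub_self, zero_mul]
      linarith
    by_cases hl0 : l = i0
    · rw [hl0] at hgil ⊢
      rw [hP'i0, ht0]
      have hb1 : c * (∑ m, if gi m then y' m else 0)
          ≤ (∑ m, if gi m then (1:ℝ) else 0) * k := by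
        rw [Finset.mul_sum, Finset.sum_mul]
        apply Finset.sum_le_sum
        intro m _
        by_cases hgm : gi m
        · simp only [hgm, if_true, one_mul]
          have hmne : m ≠ i0 := by
            intro h; rw [h, hgil] at hgm; simp at hgm
          exact hcy' m hmne
        · simp [hgm]
      have h1 := V_ub hB hc zero_le_one le_rfl hSy0 yi hyi0'
      have h2 := V_le_lin hB hc zero_le_one le_rfl hSy0
      have h3 : (0:ℝ) ≤ c * xi := mul_nonneg hc.le hxi0'
      simp only [sub_zero, zero_mul]
      linarith
    · -- generic deviator
      have ht0l := (h01 l).1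
      have ht1l := (h01 l).2
      have ht0l' : (0:ℝ) ≤ 1 - t l := by linarith
      have ht1l' : (1:ℝ) - t l ≤ 1 := by linarith
      rw [hP' l hl0 hl1]
      set q2 : Fin n → Bool := fun m =>
        gi m && (!decide (m = i0)) && (!decide (m = i1))
          && (decide (x' m ≠ 0) && decide (y' m ≠ 0)) with hq2
      set q1 : Fin n → Bool := fun m =>
        gi m && (!decide (m = i0)) && (!decide (m = i1))
          && !(decide (x' m ≠ 0) && decide (y' m ≠ 0)) with hq1
      have hsplit : ∀ w : Fin n → ℝ,
          (∑ m, if gi m then w m else 0)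
          = (if gi i1 then w i1 else 0) + (if gi i0 then w i0 else 0)
            + (∑ m, if q1 m then w m else 0) + (∑ m, if q2 m then w m else 0) := by
        intro w
        have e : ∀ m, (if gi m then w m else 0)
            = (if gi m && decide (m = i1) then w m else 0)
              + ((if gi m && decide (m = i0) then w m else 0)
              + ((if q1 m then w m else 0) + (if q2 m then w m else 0))) := by
          intro m
          rw [hq1, hq2]
          by_cases h1 : m = i1
          · have h0 : ¬ m = i0 := by rw [h1]; exact Ne.symm hi01
            by_cases hg : gi m <;> simp [h1, h0, hg, hi01, Ne.symm hi01]
          · by_cases h0 : m = i0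
            · by_cases hg : gi m <;> simp [h1, h0, hg, hi01, Ne.symm hi01]
            · by_cases hg : gi m
              · by_cases hxy : x' m ≠ 0 ∧ y' m ≠ 0
                · simp [h1, h0, hg, hxy]
                · have hxy' : x' m = 0 ∨ y' m = 0 := by tauto
                  simp [h1, h0, hg, hxy, hxy']
              · simp [h1, h0, hg]
        rw [Finset.sum_congr rfl (fun m _ => e m)]
        rw [Finset.sum_add_distrib, Finset.sum_add_distrib, Finset.sum_add_distrib]
        rw [sum_single gi i1 w, sum_single gi i0 w]
        ring
      set S2x := ∑ m, if q2 m then x' m else 0 with hS2xd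
      set S2y := ∑ m, if q2 m then y' m else 0 with hS2yd
      set S1x := ∑ m, if q1 m then x' m else 0 with hS1xd
      set S1y := ∑ m, if q1 m then y' m else 0 with hS1yd
      set C1 := ∑ m, if q1 m then (1:ℝ) else 0 with hC1d
      set C2 := ∑ m, if q2 m then (1:ℝ) else 0 with hC2d
      have hS2x0 : 0 ≤ S2x := spill_nonneg' hx'nn q2
      have hS2y0 : 0 ≤ S2y := spill_nonneg' hy'nn q2
      have hS1x0 : 0 ≤ S1x := spill_nonneg' hx'nn q1
      have hS1y0 : 0 ≤ S1y := spill_nonneg' hy'nn q1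
      -- unpacking of q2 membership
      have hq2elim : ∀ m, q2 m = true →
          gi m = true ∧ m ≠ i0 ∧ m ≠ i1 ∧ x' m ≠ 0 ∧ y' m ≠ 0 := by
        intro m hm
        rw [hq2] at hm
        simp only [Bool.and_eq_true, Bool.not_eq_true', decide_eq_false_iff_not,
          decide_eq_true_eq] at hm
        exact ⟨hm.1.1.1, hm.1.1.2, hm.1.2, hm.2.1, hm.2.2⟩
      -- fully standalone members of q2 hold their isolation bundle in both profiles
      have hbundle : ∀ m, q2 m = true → x m = x' m ∧ y m = y' m := by
        intro m hm
        obtain ⟨hgm, hm0, hm1, hx'm, hy'm⟩ := hq2elim m hm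
        have ht0m' : (0:ℝ) ≤ 1 - t m := by linarith [(h01 m).2]
        have ht1m' : (1:ℝ) - t m ≤ 1 := by linarith [(h01 m).1]
        have hbxm : bx m = false := by
          by_contra h
          have h' : bx m = true := by simpa using h
          rw [hx'l m hm0 hm1, h'] at hx'm; simp at hx'm
        have hxm' : x' m = zfun f c (t m) := by rw [hx'l m hm0 hm1, hbxm]; simp
        have hbym : byl m = false := by
          by_contra h
          have h' : byl m = true := by simpa using h
          rw [hy'l m hm0 hm1, h'] at hy'm; simp at hy'm
        have hym' : y' m = zfun f c (1 - t m) := by rw [hy'l m hm0 hm1, hbym]; simp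
        have hDx : Df f c (t m) < k := (hbxF m).mp hbxm
        have hDy : Df f c (1 - t m) < k := (hbylF m).mp hbym
        have hgmi : g m i = false := by
          by_contra h
          have h' : g m i = true := by simpa using h
          have h2 := hlinkgain_x m h'
          have h3 : Vf f c (t m) (x i) ≤ Vf f c (t m) (Xs f c) :=
            V_mono hB hc (h01 m).1 (h01 m).2 (hx0 i) haxX
          rw [V_at_Xs hB hc (h01 m).1 (h01 m).2] at h3
          linarith
        have hgmj : g m j = false := by
          by_contra h
          have h' : g m j = true := by simpa using h
          have h2 := hlinkgain_y m h'
          have h3 : Vf f c (1 - t m) (y j) ≤ Vf f c (1 - t m) (Xs f c) :=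
            V_mono hB hc ht0m' ht1m' (hy0 j) hayX.le
          rw [V_at_Xs hB hc ht0m' ht1m'] at h3
          linarith
        have hPm := hP m
        rw [hgmi, hgmj] at hPm
        simp only [Bool.false_eq_true, if_false] at hPm
        rw [V_zero hB hc (h01 m).1 (h01 m).2, V_zero hB hc ht0m' ht1m'] at hPm
        have hraw : payoff t f c k x y g m
            = t m * f (x m) + (1 - t m) * f (y m) - c * (x m + y m) := by
          simp only [payoff]
          rw [hspx m, hspy m, hnl m, hgmi, hgmj]
          simp only [Bool.false_eq_true, if_false, add_zero, zero_add]
          ring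
        rw [hraw] at hPm
        have hW1' := Wf_max hB hc (h01 m).1 (h01 m).2
        have hW2' := Wf_max hB hc ht0m' ht1m'
        have htm0 : 0 < t m := by
          rcases lt_or_eq_of_le (h01 m).1 with h | h
          · exact h
          · exact absurd (hinj (by rw [← h, ht0])) hm0
        have htm1 : t m < 1 := by
          rcases lt_or_eq_of_le (h01 m).2 with h | h
          · exact h
          · exact absurd (hinj (by rw [h, ht1])) hm1
        have hxeq : t m * f (x m) - c * (x m) = Wf f c (t m) := by
          linarith [hW1' (x m) (hx0 m), hW2' (y m) (hy0 m)]
        have hyeq : (1 - t m) * f (y m) - c * (y m) = Wf f c (1 - t m) := by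
          linarith [hW1' (x m) (hx0 m), hW2' (y m) (hy0 m)]
        have hxm : x m = zfun f c (t m) := by
          refine max_unique hB hc htm0 ⟨hx0 m, fun u hu => ?_⟩
            (zfun_spec' hB hc (h01 m).1 (h01 m).2)
          rw [hxeq]
          exact hW1' u hu
        have hym : y m = zfun f c (1 - t m) := by
          refine max_unique hB hc (by linarith) ⟨hy0 m, fun u hu => ?_⟩
            (zfun_spec' hB hc ht0m' ht1m')
          rw [hyeq]
          exact hW2' u hu
        exact ⟨by rw [hxm, hxm'], by rw [hym, hym']⟩
      -- the mirror deviation in the old equilibrium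
      set mx : Bool := gi i1 && g l i with hmx
      set my : Bool := gi i0 && g l j with hmy
      set gi' : Fin n → Bool := fun m =>
        q2 m || (decide (m = i) && mx) || (decide (m = j) && my) with hgi'
      have hbyli : byl i = true := (hbylT i).mpr hkDi
      have hy'i : y' i = 0 := by rw [hy'l i hii0 hii1, hbyli]; simp
      have hbxj : bx j = true := (hbxT j).mpr hkDj
      have hx'j2 : x' j = 0 := by rw [hx'l j hji0 hji1, hbxj]; simp
      have hq2i : q2 i = false := by
        by_contra h
        have h' : q2 i = true := by simpa using h
        exact (hq2elim i h').2.2.2.2 hy'i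
      have hq2j : q2 j = false := by
        by_contra h
        have h' : q2 j = true := by simpa using h
        exact (hq2elim j h').2.2.2.1 hx'j2
      have hgi'l : gi' l = false := by
        rw [hgi']
        have h2 : q2 l = false := by rw [hq2]; simp [hgil]
        by_cases hli : l = i
        · have hmxf : mx = false := by rw [hmx, hli, hgll i]; simp
          have hlj : ¬ l = j := by rw [hli]; exact hij
          simp [h2, hmxf, hlj]
        · by_cases hlj : l = j
          · have hmyf : my = false := by rw [hmy, hlj, hgll j]; simp
            simp [h2, hmyf, hli]
          · simp [h2, hli, hlj]
      have hsplitM : ∀ w : Fin n → ℝ, (∑ m, if gi' m then w m else 0)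
          = (∑ m, if q2 m then w m else 0)
            + (if mx then w i else 0) + (if my then w j else 0) := by
        intro w
        have e : ∀ m, (if gi' m then w m else 0)
            = (if q2 m then w m else 0)
              + ((if m = i then (if mx then w i else 0) else 0)
              + (if m = j then (if my then w j else 0) else 0)) := by
          intro m
          rw [hgi']
          by_cases hmi : m = i
          · have hmj : ¬ m = j := by rw [hmi]; exact hij
            by_cases hm : mx <;> simp [hmi, hmj, hm, hq2i, hij, Ne.symm hij]
          · by_cases hmj : m = j
            · by_cases hm : my <;> simp [hmi, hmj, hm, hq2j, hij, Ne.symm hij]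
            · by_cases hq : q2 m <;> simp [hmi, hmj, hq]
        rw [Finset.sum_congr rfl (fun m _ => e m)]
        rw [Finset.sum_add_distrib, Finset.sum_add_distrib]
        rw [Finset.sum_ite_eq' Finset.univ i (fun _ => if mx then w i else 0),
          Finset.sum_ite_eq' Finset.univ j (fun _ => if my then w j else 0)]
        simp only [Finset.mem_univ, if_true]
        ring
      have hmir := dev_le hB hc hNE ht0l ht1l gi' hgi'l
      rw [hsplitM x, hsplitM y, hsplitM (fun _ => (1:ℝ))] at hmir
      have hq2x : (∑ m, if q2 m then x m else 0) = S2x := by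
        rw [hS2xd]
        refine Finset.sum_congr rfl fun m _ => ?_
        by_cases hm : q2 m
        · simp only [hm, if_true, (hbundle m (by simpa using hm)).1]
        · simp [hm]
      have hq2y : (∑ m, if q2 m then y m else 0) = S2y := by
        rw [hS2yd]
        refine Finset.sum_congr rfl fun m _ => ?_
        by_cases hm : q2 m
        · simp only [hm, if_true, (hbundle m (by simpa using hm)).2]
        · simp [hm]
      rw [hq2x, hq2y, hxj, hyi, hP l] at hmir
      simp only [ite_self, add_zero] at hmir
      -- value chain pieces
      have hVubx := V_ub hB hc ht0l ht1l hSx0 xi hxi0'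
      have hVuby := V_ub hB hc ht0l' ht1l' hSy0 yi hyi0'
      have hSxeq : (∑ m, if gi m then x' m else 0)
          = ((if gi i1 then X else 0) + S2x) + S1x := by
        rw [hsplit x', hx'i1, hx'i0]
        simp only [ite_self]
        ring
      have hSyeq : (∑ m, if gi m then y' m else 0)
          = ((if gi i0 then X else 0) + S2y) + S1y := by
        rw [hsplit y', hy'i0, hy'i1]
        simp only [ite_self]
        ring
      have hCneq : (∑ m, if gi m then (1:ℝ) else 0)
          = (if gi i1 then (1:ℝ) else 0) + (if gi i0 then (1:ℝ) else 0) + C1 + C2 :=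
        hsplit (fun _ => (1:ℝ))
      have hIb1 : (0:ℝ) ≤ (if gi i1 then X else 0) := by
        by_cases h : gi i1 <;> simp [h, hXnn]
      have hIb0 : (0:ℝ) ≤ (if gi i0 then X else 0) := by
        by_cases h : gi i0 <;> simp [h, hXnn]
      have hstepBx := V_addB hB hc ht0l ht1l (by linarith : (0:ℝ) ≤ (if gi i1 then X else 0) + S2x) hS1x0
      have hstepBy := V_addB hB hc ht0l' ht1l' (by linarith : (0:ℝ) ≤ (if gi i0 then X else 0) + S2y) hS1y0
      -- concavity steps (x side)
      have hCx1 : Vf f c (t l) (X + S2x) + Vf f c (t l) (x i)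
          ≤ Vf f c (t l) (x i + S2x) + (Wf f c (t l) + Df f c (t l)) := by
        have h := V_concave_diff hB hc ht0l ht1l (hx0 i)
          (by linarith : x i ≤ x i + S2x) (by linarith [haxX] : (0:ℝ) ≤ X - x i)
        rw [show x i + S2x + (X - x i) = X + S2x by ring,
          show x i + (X - x i) = X by ring, hXdef, V_at_Xs hB hc ht0l ht1l] at h
        exact h
      have hCx2 : Vf f c (t l) (X + S2x) + Wf f c (t l)
          ≤ Vf f c (t l) S2x + (Wf f c (t l) + Df f c (t l)) := by
        have h := V_concave_diff hB hc ht0l ht1l (le_refl (0:ℝ)) hS2x0 hXnn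
        rw [show S2x + X = X + S2x by ring, zero_add, hXdef,
          V_at_Xs hB hc ht0l ht1l, V_zero hB hc ht0l ht1l] at h
        exact h
      have hCy1 : Vf f c (1 - t l) (X + S2y) + Vf f c (1 - t l) (y j)
          ≤ Vf f c (1 - t l) (y j + S2y) + (Wf f c (1 - t l) + Df f c (1 - t l)) := by
        have h := V_concave_diff hB hc ht0l' ht1l' (hy0 j)
          (by linarith : y j ≤ y j + S2y) (by linarith [hayX] : (0:ℝ) ≤ X - y j)
        rw [show y j + S2y + (X - y j) = X + S2y by ring,
          show y j + (X - y j) = X by ring, hXdef, V_at_Xs hB hc ht0l' ht1l'] at h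
        exact h
      have hCy2 : Vf f c (1 - t l) (X + S2y) + Wf f c (1 - t l)
          ≤ Vf f c (1 - t l) S2y + (Wf f c (1 - t l) + Df f c (1 - t l)) := by
        have h := V_concave_diff hB hc ht0l' ht1l' (le_refl (0:ℝ)) hS2y0 hXnn
        rw [show S2y + X = X + S2y by ring, zero_add, hXdef,
          V_at_Xs hB hc ht0l' ht1l', V_zero hB hc ht0l' ht1l'] at h
        exact h
      have hVaxD : Vf f c (t l) (x i) ≤ Wf f c (t l) + Df f c (t l) := by
        have h := V_mono hB hc ht0l ht1l (hx0 i) haxX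
        rw [V_at_Xs hB hc ht0l ht1l] at h
        exact h
      have hVayD : Vf f c (1 - t l) (y j) ≤ Wf f c (1 - t l) + Df f c (1 - t l) := by
        have h := V_mono hB hc ht0l' ht1l' (hy0 j) hayX.le
        rw [V_at_Xs hB hc ht0l' ht1l'] at h
        exact h
      have hV0x : Vf f c (t l) 0 = Wf f c (t l) := V_zero hB hc ht0l ht1l
      have hV0y : Vf f c (1 - t l) 0 = Wf f c (1 - t l) := V_zero hB hc ht0l' ht1l'
      have hq1cost : ∀ m, q1 m = true → c * x' m + c * y' m ≤ k := by
        intro m hm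
        rw [hq1] at hm
        simp only [Bool.and_eq_true, Bool.not_eq_true', decide_eq_false_iff_not,
          decide_eq_true_eq, Bool.and_eq_false_iff, not_not] at hm
        obtain ⟨⟨⟨hgm, hm0⟩, hm1⟩, hxy⟩ := hm
        rcases hxy with h | h
        · have hx0m : x' m = 0 := h
          rw [hx0m, mul_zero, zero_add]
          exact hcy' m hm0
        · have hy0m : y' m = 0 := h
          rw [hy0m, mul_zero, add_zero]
          exact hcx' m hm1
      have hcost : c * S1x + c * S1y ≤ C1 * k := by
        rw [hS1xd, hS1yd, hC1d, Finset.mul_sum, Finset.mul_sum, Finset.sum_mul,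
          ← Finset.sum_add_distrib]
        apply Finset.sum_le_sum
        intro m _
        by_cases hm : q1 m
        · simp only [hm, if_true, one_mul]
          exact hq1cost m (by simpa using hm)
        · simp [hm]
      have hmaxDx : Df f c (t l) - k ≤ max (Df f c (t l) - k) 0 := le_max_left _ _
      have hmaxDy : Df f c (1 - t l) - k ≤ max (Df f c (1 - t l) - k) 0 := le_max_left _ _
      have hmax0x : (0:ℝ) ≤ max (Df f c (t l) - k) 0 := le_max_right _ _
      have hmax0y : (0:ℝ) ≤ max (Df f c (1 - t l) - k) 0 := le_max_right _ _
      -- final case analysis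
      rw [hSxeq] at hVubx
      rw [hSyeq] at hVuby
      rw [hSxeq, hSyeq, hCneq]
      rw [add_comm S2x (if mx then x i else 0), add_comm S2y (if my then y j else 0)] at hmir
      rw [add_mul, add_mul] at hmir
      rw [add_mul] at hmir
      rw [add_mul, add_mul, add_mul]
      rcases Bool.eq_false_or_eq_true (gi i1) with hb1 | hb1 <;>
      rcases Bool.eq_false_or_eq_true (gi i0) with hb0 | hb0 <;>
      rcases Bool.eq_false_or_eq_true (g l i) with hgli | hgli <;>
      rcases Bool.eq_false_or_eq_true (g l j) with hglj | hglj <;>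
      · simp only [hb1, hgli, Bool.false_and, Bool.and_false, Bool.true_and,
          Bool.and_true] at hmx
        simp only [hb0, hglj, Bool.false_and, Bool.and_false, Bool.true_and,
          Bool.and_true] at hmy
        simp only [hmx, hmy, hb1, hb0, hgli, hglj, Bool.false_eq_true, if_true, if_false,
          zero_add, add_zero, one_mul, zero_mul] at hmir hstepBx hstepBy hVubx hVuby ⊢
        linarith [hVubx, hVuby, hstepBx, hstepBy, hCx1, hCx2, hCy1, hCy2, hmir, hcost,
          hVaxD, hVayD, hmaxDx, hmaxDy, hmax0x, hmax0y, hk, hV0x, hV0y]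
  
  -- ### independence and contributor characterization
  have hind : ∀ l, isContributor g' l → ∀ m, g' l m = false := by
    intro l hl m
    obtain ⟨w, hw⟩ := hl
    rcases (hg'm w l hw).2 with h | h
    · rw [h]; exact hg'row0 m
    · rw [h]; exact hg'row1 m
  have hbyli : byl i = true := (hbylT i).mpr hkDi
  have hbxj : bx j = true := (hbxT j).mpr hkDj
  have hcontr : ∀ l, isContributor g' l ↔ (l = i0 ∨ l = i1) := by
    intro l
    constructor
    · rintro ⟨w, hw⟩
      exact (hg'm w l hw).2
    · rintro (h | h)
      · exact ⟨i, by rw [h, hg'li0 i hii0 hii1, hbyli]⟩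
      · exact ⟨j, by rw [h, hg'li1 j hji0 hji1, hbxj]⟩
  -- ### welfare comparison
  have hVaxD : ∀ l, Vf f c (t l) (x i) ≤ Wf f c (t l) + Df f c (t l) := by
    intro l
    have h := V_mono hB hc (h01 l).1 (h01 l).2 (hx0 i) haxX
    rw [V_at_Xs hB hc (h01 l).1 (h01 l).2] at h
    exact h
  have hVayD : ∀ l, Vf f c (1 - t l) (y j) ≤ Wf f c (1 - t l) + Df f c (1 - t l) := by
    intro l
    have ht0l' : (0:ℝ) ≤ 1 - t l := by linarith [(h01 l).2]
    have ht1l' : (1:ℝ) - t l ≤ 1 := by linarith [(h01 l).1]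
    have h := V_mono hB hc ht0l' ht1l' (hy0 j) hayX.le
    rw [V_at_Xs hB hc ht0l' ht1l'] at h
    exact h
  have hdiff : ∀ l, l ≠ i → l ≠ j → l ≠ i0 → l ≠ i1 →
      payoff t f c k x y g l ≤ payoff t f c k x' y' g' l := by
    intro l hi' hj' h0' h1'
    have ht0l := (h01 l).1
    have ht1l := (h01 l).2
    have ht0l' : (0:ℝ) ≤ 1 - t l := by linarith
    have ht1l' : (1:ℝ) - t l ≤ 1 := by linarith
    rw [hP l, hP' l h0' h1']
    have hV0x := V_zero hB hc ht0l ht1l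
    have hV0y := V_zero hB hc ht0l' ht1l'
    rcases Bool.eq_false_or_eq_true (g l i) with hgl | hgl <;>
      rcases Bool.eq_false_or_eq_true (g l j) with hgl2 | hgl2 <;>
      simp only [hgl, hgl2, Bool.false_eq_true, if_true, if_false] <;>
      linarith [hVaxD l, hVayD l, hk,
        le_max_left (Df f c (t l) - k) 0, le_max_right (Df f c (t l) - k) 0,
        le_max_left (Df f c (1 - t l) - k) 0, le_max_right (Df f c (1 - t l) - k) 0]
  have hpayi : payoff t f c k x y g i
      = Wf f c (t i) + Vf f c (1 - t i) (y j) - k := by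
    rw [hP i, hgll i, hgij]
    simp only [Bool.false_eq_true, if_false, if_true]
    rw [V_zero hB hc (h01 i).1 (h01 i).2]
    ring
  have hpayj : payoff t f c k x y g j
      = Vf f c (t j) (x i) + Wf f c (1 - t j) - k := by
    rw [hP j, hgji, hgll j]
    simp only [Bool.false_eq_true, if_false, if_true]
    rw [V_zero hB hc (by linarith [(h01 j).2] : (0:ℝ) ≤ 1 - t j)
      (by linarith [(h01 j).1] : (1:ℝ) - t j ≤ 1)]
    ring
  have hgapi : payoff t f c k x y g i + (1 - t i) * (f X - f (y j))
      + max (c * x i - k) 0 ≤ payoff t f c k x' y' g' i := by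
    rw [hpayi, hP' i hii0 hii1]
    have hcorn : Vf f c (1 - t i) (y j) = (1 - t i) * f (y j) := by
      apply V_corner hB hc
      rw [hay]
      exact zfun_mono hB hc (by linarith) (by linarith) (by linarith)
    have hmaxi' : max (Df f c (1 - t i) - k) 0 = Df f c (1 - t i) - k :=
      max_eq_left (by linarith [hkDi])
    have hDleft : max (c * x i - k) 0 ≤ max (Df f c (t i) - k) 0 := by
      apply max_le_max _ (le_refl (0:ℝ))
      have h := D_ge_cz hB hc (h01 i).1 (h01 i).2
      rw [← hax] at h
      linarith
    have hDdef : Df f c (1 - t i) = (1 - t i) * f X - Wf f c (1 - t i) := by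
      rw [Df, hXdef]
    rw [hcorn, hmaxi']
    linarith [hDleft]
  have hgapj : payoff t f c k x y g j + max (c * y j - k) 0
      ≤ payoff t f c k x' y' g' j := by
    rw [hpayj, hP' j hji0 hji1]
    have hDright : max (c * y j - k) 0 ≤ max (Df f c (1 - t j) - k) 0 := by
      apply max_le_max _ (le_refl (0:ℝ))
      have h := D_ge_cz hB hc (by linarith [(h01 j).2] : (0:ℝ) ≤ 1 - t j)
        (by linarith [(h01 j).1] : (1:ℝ) - t j ≤ 1)
      rw [← hay] at h
      linarith
    have hmaxj' : max (Df f c (t j) - k) 0 = Df f c (t j) - k :=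
      max_eq_left (by linarith [hkDj])
    rw [hmaxj']
    linarith [hVaxD j, hDright]
  have hzfun1X : zfun f c 1 = X := by rw [hXdef, Xs]
  have hVb1 : Vf f c 1 (y j) = Wf f c 1 + c * y j := by
    apply V_below hB hc
    rw [hzfun1X]
    exact hayX.le
  have hVb1x : Vf f c 1 (x i) = Wf f c 1 + c * x i := by
    apply V_below hB hc
    rw [hzfun1X]
    exact haxX
  have hV10 : Vf f c 1 0 = Wf f c 1 := V_zero hB hc zero_le_one le_rfl
  have hgapi0 : payoff t f c k x y g i0 ≤ Wf f c 1 + max (c * y j - k) 0 := by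
    rw [hP i0]
    have hv0 : Vf f c (t i0) (if g i0 i then x i else 0) = 0 := by
      rw [ht0]
      apply V_taste_zero _ (zfun_zero hB hc)
      rcases Bool.eq_false_or_eq_true (g i0 i) with h | h <;> simp [h, hx0 i]
    rw [hv0, ht0, zero_add]
    rw [show (1:ℝ) - 0 = 1 by ring]
    rcases Bool.eq_false_or_eq_true (g i0 j) with h | h <;>
      rcases Bool.eq_false_or_eq_true (g i0 i) with h2 | h2 <;>
      simp only [h, h2, Bool.false_eq_true, if_true, if_false] <;>
      linarith [hVb1, hV10, le_max_left (c * y j - k) 0, le_max_right (c * y j - k) 0, hk]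
  have hgapi1 : payoff t f c k x y g i1 ≤ Wf f c 1 + max (c * x i - k) 0 := by
    rw [hP i1]
    have hv0 : Vf f c (1 - t i1) (if g i1 j then y j else 0) = 0 := by
      rw [ht1, sub_self]
      apply V_taste_zero _ (zfun_zero hB hc)
      rcases Bool.eq_false_or_eq_true (g i1 j) with h | h <;> simp [h, hy0 j]
    rw [hv0, ht1]
    rcases Bool.eq_false_or_eq_true (g i1 i) with h | h <;>
      rcases Bool.eq_false_or_eq_true (g i1 j) with h2 | h2 <;>
      simp only [h, h2, Bool.false_eq_true, if_true, if_false] <;>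
      linarith [hVb1x, hV10, le_max_left (c * x i - k) 0, le_max_right (c * x i - k) 0, hk]
  have hstrict : 0 < (1 - t i) * (f X - f (y j)) := by
    apply mul_pos (by linarith)
    have h := hB.2.1 (show y j ∈ Ici (0:ℝ) from hy0 j)
      (show X ∈ Ici (0:ℝ) from hXnn) hayX
    linarith
  -- assemble the sum comparison
  refine ⟨x', y', g', hNE', hind, hcontr, ?_⟩
  have hjR1 : j ∈ Finset.univ.erase i :=
    Finset.mem_erase.mpr ⟨Ne.symm hij, Finset.mem_univ j⟩
  have hi0R2 : i0 ∈ (Finset.univ.erase i).erase j :=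
    Finset.mem_erase.mpr ⟨Ne.symm hji0,
      Finset.mem_erase.mpr ⟨Ne.symm hii0, Finset.mem_univ i0⟩⟩
  have hi1R3 : i1 ∈ ((Finset.univ.erase i).erase j).erase i0 :=
    Finset.mem_erase.mpr ⟨hi01.symm,
      Finset.mem_erase.mpr ⟨Ne.symm hji1,
        Finset.mem_erase.mpr ⟨Ne.symm hii1, Finset.mem_univ i1⟩⟩⟩
  have hsumrest : ∑ l ∈ (((Finset.univ.erase i).erase j).erase i0).erase i1,
      payoff t f c k x y g l
      ≤ ∑ l ∈ (((Finset.univ.erase i).erase j).erase i0).erase i1,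
      payoff t f c k x' y' g' l := by
    apply Finset.sum_le_sum
    intro l hl
    have h1 := Finset.mem_erase.mp hl
    have h2 := Finset.mem_erase.mp h1.2
    have h3 := Finset.mem_erase.mp h2.2
    have h4 := Finset.mem_erase.mp h3.2
    exact hdiff l h4.1 h3.1 h2.1 h1.1
  have eF1 := Finset.add_sum_erase Finset.univ (payoff t f c k x y g) (Finset.mem_univ i)
  have eF2 := Finset.add_sum_erase _ (payoff t f c k x y g) hjR1
  have eF3 := Finset.add_sum_erase _ (payoff t f c k x y g) hi0R2
  have eF4 := Finset.add_sum_erase _ (payoff t f c k x y g) hi1R3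
  have eG1 := Finset.add_sum_erase Finset.univ (payoff t f c k x' y' g') (Finset.mem_univ i)
  have eG2 := Finset.add_sum_erase _ (payoff t f c k x' y' g') hjR1
  have eG3 := Finset.add_sum_erase _ (payoff t f c k x' y' g') hi0R2
  have eG4 := Finset.add_sum_erase _ (payoff t f c k x' y' g') hi1R3
  rw [← eF1, ← eF2, ← eF3, ← eF4, ← eG1, ← eG2, ← eG3, ← eG4]
  rw [hP'i0, hP'i1]
  linarith [hsumrest, hgapi, hgapj, hgapi0, hgapi1, hstrict]

end Main
end WithAssumptions
end S16


open S16 Set in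
/-- Lemma A-7: for every collaborative equilibrium there is an
independent equilibrium, whose large contributors are exactly the extreme-type
players, with strictly higher welfare; hence the welfare maximizing
equilibrium is never collaborative. -/
theorem statement16 {n : ℕ} (hn : 3 ≤ n)
    (t : Fin n → ℝ) (hT : TypeAssumptions t)
    (f : ℝ → ℝ) (c k : ℝ) (hc : 0 < c) (hk : 0 < k)
    (hB : BenefitAssumptions f c)
    (x y : Fin n → ℝ) (g : Fin n → Fin n → Bool)
    (hNE : NashEq t f c k x y g)
    (i j : Fin n) (hij : i ≠ j)
    (hi : isContributor g i) (hj : isContributor g j)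
    (hall : ∀ l, isContributor g l → l = i ∨ l = j)
    (hgij : g i j = true) (hgji : g j i = true)
    (i0 i1 : Fin n) (ht0 : t i0 = 0) (ht1 : t i1 = 1) :
    ∃ (x' y' : Fin n → ℝ) (g' : Fin n → Fin n → Bool),
      NashEq t f c k x' y' g' ∧
      (∀ l, isContributor g' l → ∀ m, g' l m = false) ∧
      (∀ l, isContributor g' l ↔ (l = i0 ∨ l = i1)) ∧
      ∑ l, payoff t f c k x y g l < ∑ l, payoff t f c k x' y' g' l := by
  classical
  have hinj := hT.1
  have hmem := hT.2.1
  have h01 : ∀ l, 0 ≤ t l ∧ t l ≤ 1 := fun l => ⟨(hmem l).1, (hmem l).2⟩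
  have hx0 := hNE.1
  have hy0 := hNE.2.1
  have hgll := hNE.2.2.1
  have hsupp : ∀ l m, g l m = true → m = i ∨ m = j := fun l m h => hall m ⟨l, h⟩
  have hsxi : spill x g i = x j := by
    simp only [spill]
    rw [sum_pair_support x (g i) hij (hsupp i), hgll i, hgij]
    simp
  have hsyi : spill y g i = y j := by
    simp only [spill]
    rw [sum_pair_support y (g i) hij (hsupp i), hgll i, hgij]
    simp
  have hsxj : spill x g j = x i := by
    simp only [spill]
    rw [sum_pair_support x (g j) hij (hsupp j), hgll j, hgji]
    simp
  have hsyj : spill y g j = y i := by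
    simp only [spill]
    rw [sum_pair_support y (g j) hij (hsupp j), hgll j, hgji]
    simp
  have hnli : nlinks g i = 1 := by
    simp only [nlinks]
    rw [sum_pair_support (fun _ => (1:ℝ)) (g i) hij (hsupp i), hgll i, hgij]
    simp
  have hnlj : nlinks g j = 1 := by
    simp only [nlinks]
    rw [sum_pair_support (fun _ => (1:ℝ)) (g j) hij (hsupp j), hgll j, hgji]
    simp
  -- not both contribute to the same good
  have hnbx : ¬(0 < x i ∧ 0 < x j) := by
    rintro ⟨h1, h2⟩
    have f1 : t i * deriv f (x i + x j) = c := by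
      apply foc_interior hB (hx0 j) h1
      intro u hu
      have h := own_opt_x hNE i u hu
      rw [hsxi] at h
      exact h
    have f2 : t j * deriv f (x j + x i) = c := by
      apply foc_interior hB (hx0 i) h2
      intro u hu
      have h := own_opt_x hNE j u hu
      rw [hsxj] at h
      exact h
    rw [show x j + x i = x i + x j by ring] at f2
    have hd : deriv f (x i + x j) ≠ 0 := by
      intro h
      rw [h, mul_zero] at f1
      linarith
    have heq : t i = t j := by
      have h3 : t i * deriv f (x i + x j) = t j * deriv f (x i + x j) := by
        rw [f1, f2]
      exact mul_right_cancel₀ hd h3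
    exact hij (hinj heq)
  have hnby : ¬(0 < y i ∧ 0 < y j) := by
    rintro ⟨h1, h2⟩
    have f1 : (1 - t i) * deriv f (y i + y j) = c := by
      apply foc_interior hB (hy0 j) h1
      intro u hu
      have h := own_opt_y hNE i u hu
      rw [hsyi] at h
      exact h
    have f2 : (1 - t j) * deriv f (y j + y i) = c := by
      apply foc_interior hB (hy0 i) h2
      intro u hu
      have h := own_opt_y hNE j u hu
      rw [hsyj] at h
      exact h
    rw [show y j + y i = y i + y j by ring] at f2
    have hd : deriv f (y i + y j) ≠ 0 := by
      intro h
      rw [h, mul_zero] at f1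
      linarith
    have heq : (1 : ℝ) - t i = 1 - t j := by
      have h3 : (1 - t i) * deriv f (y i + y j) = (1 - t j) * deriv f (y i + y j) := by
        rw [f1, f2]
      exact mul_right_cancel₀ hd h3
    exact hij (hinj (by linarith))
  -- each of i, j provides something (else the other drops her link)
  have hbj : ¬(x j = 0 ∧ y j = 0) := by
    rintro ⟨h1, h2⟩
    have hdev := dev_le hB hc hNE (h01 i).1 (h01 i).2 (fun _ => false) rfl
    simp only [Bool.false_eq_true, if_false, Finset.sum_const_zero, zero_mul, sub_zero] at hdev
    rw [V_zero hB hc (h01 i).1 (h01 i).2,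
      V_zero hB hc (by linarith [(h01 i).2] : (0:ℝ) ≤ 1 - t i)
        (by linarith [(h01 i).1] : (1:ℝ) - t i ≤ 1)] at hdev
    have hpe := payoff_eq hB hc hNE (h01 i).1 (h01 i).2 (l := i)
    rw [hsxi, hsyi, hnli, h1, h2,
      V_zero hB hc (h01 i).1 (h01 i).2,
      V_zero hB hc (by linarith [(h01 i).2] : (0:ℝ) ≤ 1 - t i)
        (by linarith [(h01 i).1] : (1:ℝ) - t i ≤ 1)] at hpe
    rw [hpe] at hdev
    linarith
  have hbi : ¬(x i = 0 ∧ y i = 0) := by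
    rintro ⟨h1, h2⟩
    have hdev := dev_le hB hc hNE (h01 j).1 (h01 j).2 (fun _ => false) rfl
    simp only [Bool.false_eq_true, if_false, Finset.sum_const_zero, zero_mul, sub_zero] at hdev
    rw [V_zero hB hc (h01 j).1 (h01 j).2,
      V_zero hB hc (by linarith [(h01 j).2] : (0:ℝ) ≤ 1 - t j)
        (by linarith [(h01 j).1] : (1:ℝ) - t j ≤ 1)] at hdev
    have hpe := payoff_eq hB hc hNE (h01 j).1 (h01 j).2 (l := j)
    rw [hsxj, hsyj, hnlj, h1, h2,
      V_zero hB hc (h01 j).1 (h01 j).2,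
      V_zero hB hc (by linarith [(h01 j).2] : (0:ℝ) ≤ 1 - t j)
        (by linarith [(h01 j).1] : (1:ℝ) - t j ≤ 1)] at hpe
    rw [hpe] at hdev
    linarith
  -- orientation case split
  by_cases hxi : 0 < x i
  · have hxj : x j = 0 := by
      rcases (hx0 j).lt_or_eq with h | h
      · exact absurd ⟨hxi, h⟩ hnbx
      · exact h.symm
    have hyj : 0 < y j := by
      rcases (hy0 j).lt_or_eq with h | h
      · exact h
      · exact absurd ⟨hxj, h.symm⟩ hbj
    have hyi : y i = 0 := by
      rcases (hy0 i).lt_or_eq with h | h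
      · exact absurd ⟨h, hyj⟩ hnby
      · exact h.symm
    exact main_aux hB hc t hT k hk x y g hNE i j hij hall hgij hgji i0 i1 ht0 ht1
      hxi hyi hxj hyj
  · have hxi0 : x i = 0 := by
      rcases (hx0 i).lt_or_eq with h | h
      · exact absurd h hxi
      · exact h.symm
    have hyi : 0 < y i := by
      rcases (hy0 i).lt_or_eq with h | h
      · exact h
      · exact absurd ⟨hxi0, h.symm⟩ hbi
    have hyj : y j = 0 := by
      rcases (hy0 j).lt_or_eq with h | h
      · exact absurd ⟨hyi, h⟩ hnby
      · exact h.symm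
    have hxj : 0 < x j := by
      rcases (hx0 j).lt_or_eq with h | h
      · exact h
      · exact absurd ⟨h.symm, hyj⟩ hbj
    have hall' : ∀ l, isContributor g l → l = j ∨ l = i := fun l h => (hall l h).symm
    exact main_aux hB hc t hT k hk x y g hNE j i (Ne.symm hij) hall' hgji hgij i0 i1 ht0 ht1
      hxj hyj hxi0 hyi
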